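/- arXiv:0809.1922 — 3 statements merged into one kernel-verified Lean document; each statement's English description precedes it below -/
import Mathlib

section
/- Let (S,*,n) be an Okubo algebra over a field k with a grading S = ⊕_{g∈G} S_g by a group G such that the identity component S_1 is zero. Then every element of the support has order 3 in G, every nonzero homogeneous component is one-dimensional, the support consists of exactly 8 elements, and the support together with the identity forms a subgroup of G isomorphic to Z/3 × Z/3. Moreover, there exist elements g, h in the support generating this subgroup and elements x, y with S_g = kx, S_h = ky, n(x) = 0, n(x, x*x) ≠ 0, n(y) = 0, n(y, y*y) ≠ 0, n(a, b) = 0 for all a ∈ {x, x*x}, b ∈ {y, y*y}, and x*y = 0. -/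
/-!
Homogeneous elements are isotropic, and `A g` pairs nondegenerately only with `A g⁻¹`. Feeding
this into the linearizations of `(x * y) * x = n x • y = x * (y * x)` shows, for `0 ≠ x ∈ A g`,
that `x * x ≠ 0`, `polar n x (x * x) ≠ 0` and `(x * x) * (x * x) = polar n x (x * x) • x`; hence
`g ^ 3 = 1`, and evaluating `(x * b) * (x * x)` in two ways puts every `b ∈ A g` on the line
through `x`. The support is closed under products other than `1` and under inverses, so together
with `1` it is a subgroup of order `1 + dim S = 9` and exponent `3`, i.e. `(ℤ/3)²`. For the second
generator: if `x * A h ≠ 0`, pairing `x * A h` with `A (g * h)⁻¹` yields `z` with `z * x ≠ 0`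
spanning `A h⁻¹`, and `x * (z * x) = n x • z = 0`, so `x` annihilates `A h⁻¹`.
-/

open QuadraticMap Subgroup

theorem iSupIndep.eq_of_mem_of_mem {R M ι : Type*} [Ring R] [AddCommGroup M] [Module R M]
    {A : ι → Submodule R M} (hA : iSupIndep A) {i j : ι} {x : M} (hi : x ∈ A i) (hj : x ∈ A j)
    (hx : x ≠ 0) : i = j := by
  by_contra hij
  exact hx (Submodule.disjoint_def.mp (hA.pairwiseDisjoint hij) x hi hj)

theorem iSupIndep.add_eq_zero_of_mem {R M ι : Type*} [Ring R] [AddCommGroup M] [Module R M]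
    {A : ι → Submodule R M} (hA : iSupIndep A) {a b c : ι} (hca : c ≠ a) (hcb : c ≠ b)
    {y z : M} (hy : y ∈ A a) (hz : z ∈ A b) (hyz : y + z ∈ A c) : y + z = 0 := by
  have hle : A a ⊔ A b ≤ ⨆ i ∈ ({a, b} : Set ι), A i :=
    sup_le (le_biSup A (by simp)) (le_biSup A (by simp))
  have hdisj := hA.disjoint_biSup (x := c) (y := {a, b}) (by simp [hca, hcb])
  exact Submodule.disjoint_def.mp hdisj _ hyz (hle (Submodule.add_mem_sup hy hz))

theorem DirectSum.IsInternal.ncard_ne_bot_eq_finrank {k M ι : Type*} [Field k] [AddCommGroup M]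
    [Module k M] [FiniteDimensional k M] [DecidableEq ι] {A : ι → Submodule k M}
    (hA : DirectSum.IsInternal A) (hline : ∀ i, A i ≠ ⊥ → Module.finrank k (A i) = 1) :
    {i | A i ≠ ⊥}.ncard = Module.finrank k M := by
  choose v hv hv0 using fun i : {i // A i ≠ ⊥} => Submodule.exists_mem_ne_zero_of_ne_bot i.2
  have hli : LinearIndependent k v :=
    (hA.submodule_iSupIndep.comp Subtype.val_injective).linearIndependent _ hv hv0
  have hsp : ⊤ ≤ Submodule.span k (Set.range v) := by
    rw [← hA.submodule_iSup_eq_top]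
    refine iSup_le fun i => ?_
    by_cases hi : A i = ⊥
    · simp [hi]
    · rw [eq_span_singleton_of_mem_of_finrank_eq_one (hline i hi) (hv ⟨i, hi⟩)
        (hv0 ⟨i, hi⟩)]
      exact Submodule.span_mono (Set.singleton_subset_iff.mpr (Set.mem_range_self _))
  rw [Module.finrank_eq_nat_card_basis (Module.Basis.mk hli hsp)]
  rfl

section Group

variable {G : Type*} [Group G]

theorem mul_ne_one_of_notMem_zpowers {p : ℕ} [Fact p.Prime] {g h a b : G} (hh : orderOf h = p)
    (hgh : h ∉ zpowers g) (ha : a ∈ zpowers g) (hb : b ∈ zpowers h) (hb1 : b ≠ 1) :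
    a * b ≠ 1 := by
  intro hab
  have hbg : b ∈ zpowers g := by
    rw [eq_inv_of_mul_eq_one_right hab]; exact inv_mem ha
  obtain ⟨m, hm⟩ := mem_zpowers_of_prime_card (G := zpowers h) ((Nat.card_zpowers h).trans hh)
    (g := ⟨b, hb⟩) (g' := ⟨h, mem_zpowers h⟩) (by simpa using hb1)
  have : b ^ m = h := congrArg Subtype.val hm
  exact hgh (this ▸ zpow_mem hbg m)

theorem closure_pair_eq_of_card_eq_prime_sq {p : ℕ} [Fact p.Prime] {H : Subgroup G}
    (hH : Nat.card H = p ^ 2) {g h : G} (hg : g ∈ H) (hh : h ∈ H) (hg1 : g ≠ 1)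
    (hgh : h ∉ zpowers g) : closure {g, h} = H := by
  have hp := (Fact.out : p.Prime)
  set K := closure {g, h}
  have hKH : K ≤ H := (closure_le H).mpr (by simp [Set.insert_subset_iff, hg, hh])
  have hgK : zpowers g ≤ K := zpowers_le.mpr (subset_closure (by simp))
  have hgK' : zpowers g ≠ K := fun e => hgh (e ▸ subset_closure (by simp))
  have hdvd : orderOf g ∣ Nat.card K := Nat.card_zpowers g ▸ card_dvd_of_le hgK
  have : Finite H := Nat.finite_of_card_ne_zero (by rw [hH]; exact pow_ne_zero 2 hp.ne_zero)
  have : Finite K := Finite.of_injective _ (inclusion_injective hKH)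
  obtain ⟨m, hm, hKm⟩ := (Nat.dvd_prime_pow hp).mp (hH ▸ card_dvd_of_le hKH)
  refine eq_of_le_of_card_ge hKH ?_
  interval_cases m
  · rw [pow_zero, card_eq_one] at hKm
    have hgK := hgK (mem_zpowers g)
    rw [hKm, mem_bot] at hgK
    exact absurd hgK hg1
  · rw [pow_one] at hKm
    rcases hp.eq_one_or_self_of_dvd _ (hKm ▸ hdvd) with h1 | hgp
    · exact absurd (orderOf_eq_one_iff.mp h1) hg1
    · exact absurd (eq_of_le_of_card_ge hgK (by rw [Nat.card_zpowers, hKm, hgp])) hgK'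
  · rw [hH, hKm]

theorem nonempty_mulEquiv_zmod_prod {p : ℕ} [Fact p.Prime] (hG : Nat.card G = p ^ 2)
    (hexp : ∀ x : G, x ^ p = 1) : Nonempty (G ≃* Multiplicative (ZMod p × ZMod p)) := by
  have hp := (Fact.out : p.Prime)
  have : Finite G := Nat.finite_of_card_ne_zero (by rw [hG]; exact pow_ne_zero 2 hp.ne_zero)
  have : Nontrivial G := Finite.one_lt_card_iff_nontrivial.mp
    (by rw [hG]; exact one_lt_pow₀ hp.one_lt two_ne_zero)
  have : IsMulCommutative G := IsPGroup.isMulCommutative_of_card_eq_prime_sq hG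
  obtain ⟨g, hg1⟩ := exists_ne (1 : G)
  obtain ⟨h, hgh⟩ : ∃ h, h ∉ zpowers g := by
    by_contra! hall
    have htop := (card_eq_iff_eq_top (zpowers g)).mpr (eq_top_iff' _ |>.mpr hall)
    rw [Nat.card_zpowers, orderOf_eq_prime (hexp g) hg1, hG] at htop
    exact absurd htop (ne_of_lt (lt_self_pow₀ hp.one_lt one_lt_two))
  have hpow : ∀ x : G, ∀ a b : ZMod p, x ^ (a + b).val = x ^ a.val * x ^ b.val := fun x a b => by
    rw [ZMod.val_add, ← pow_eq_pow_mod _ (hexp x), pow_add]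
  let f : Multiplicative (ZMod p × ZMod p) →* G :=
    MonoidHom.mk' (fun m => g ^ m.toAdd.1.val * h ^ m.toAdd.2.val) fun a b => by
      simp only [toAdd_mul, Prod.fst_add, Prod.snd_add, hpow]
      exact ((Commute.pow_pow (mul_comm' h g) _ _).mul_mul_mul_comm _ _).symm
  have hsurj : Function.Surjective f := by
    rw [← MonoidHom.range_eq_top, eq_top_iff,
      ← closure_pair_eq_of_card_eq_prime_sq (card_top.trans hG) (mem_top g) (mem_top h) hg1 hgh,
      closure_le, Set.insert_subset_iff, Set.singleton_subset_iff]
    exact ⟨⟨Multiplicative.ofAdd (1, 0), by simp [f, ZMod.val_one]⟩,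
      ⟨Multiplicative.ofAdd (0, 1), by simp [f, ZMod.val_one]⟩⟩
  have hbij : Function.Bijective f :=
    (Nat.bijective_iff_surjective_and_card f).mpr ⟨hsurj, by simp [hG, pow_two]⟩
  exact ⟨(MulEquiv.ofBijective f hbij).symm⟩

end Group

structure IsSymmetricComposition {k S : Type*} [Field k] [AddCommGroup S] [Module k S]
    (mul : S →ₗ[k] S →ₗ[k] S) (n : QuadraticForm k S) : Prop where
  nondegenerate : ∀ x : S, (∀ y : S, polar n x y = 0) → x = 0
  map_mul : ∀ x y : S, n (mul x y) = n x * n y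
  polar_mul_assoc : ∀ x y z : S, polar n (mul x y) z = polar n x (mul y z)

namespace IsSymmetricComposition

variable {k S : Type*} [Field k] [AddCommGroup S] [Module k S]
  {mul : S →ₗ[k] S →ₗ[k] S} {n : QuadraticForm k S}

theorem polar_mul_mul_left (hS : IsSymmetricComposition mul n) (x y z : S) :
    polar n (mul x y) (mul x z) = n x * polar n y z := by
  simp only [polar, ← map_add, hS.map_mul]
  ring

theorem polar_mul_mul_right (hS : IsSymmetricComposition mul n) (x y z : S) :
    polar n (mul x z) (mul y z) = polar n x y * n z := by
  simp only [polar, ← LinearMap.add_apply, ← map_add, hS.map_mul]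
  ring

theorem mul_mul_self_left (hS : IsSymmetricComposition mul n) (x y : S) :
    mul (mul x y) x = n x • y :=
  sub_eq_zero.mp <| hS.nondegenerate _ fun z => by
    rw [polar_sub_left, hS.polar_mul_assoc, hS.polar_mul_mul_left, polar_smul_left, smul_eq_mul,
      sub_self]

theorem mul_mul_self_right (hS : IsSymmetricComposition mul n) (x y : S) :
    mul x (mul y x) = n x • y :=
  sub_eq_zero.mp <| hS.nondegenerate _ fun z => by
    rw [polar_sub_left, polar_comm, ← hS.polar_mul_assoc, hS.polar_mul_mul_right, polar_smul_left,
      smul_eq_mul, polar_comm, mul_comm, sub_self]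

theorem mul_mul_add_mul_mul_left (hS : IsSymmetricComposition mul n) (a b c : S) :
    mul (mul a b) c + mul (mul c b) a = polar n a c • b := by
  have h := hS.mul_mul_self_left (a + c) b
  simp only [map_add, LinearMap.add_apply, hS.mul_mul_self_left, polar] at h ⊢
  rw [← sub_eq_zero] at h ⊢
  rw [← h]
  simp only [sub_smul]
  abel

theorem mul_mul_add_mul_mul_right (hS : IsSymmetricComposition mul n) (a b c : S) :
    mul a (mul b c) + mul c (mul b a) = polar n a c • b := by
  have h := hS.mul_mul_self_right (a + c) b
  simp only [map_add, LinearMap.add_apply, hS.mul_mul_self_right, polar] at h ⊢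
  rw [← sub_eq_zero] at h ⊢
  rw [← h]
  simp only [sub_smul]
  abel

theorem polar_mul_left_eq_polar_mul_right (hS : IsSymmetricComposition mul n) (x w z : S) :
    polar n (mul x w) z = polar n w (mul z x) := by
  rw [hS.polar_mul_assoc, polar_comm, hS.polar_mul_assoc]

theorem mul_self_mul_mul_self_of_isotropic (hS : IsSymmetricComposition mul n) {x : S}
    (hx : n x = 0) : mul (mul x x) (mul x x) = polar n x (mul x x) • x := by
  rw [← hS.mul_mul_add_mul_mul_left, hS.mul_mul_self_left, hx, zero_smul, map_zero,
    LinearMap.zero_apply, add_zero]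

theorem mul_self_mul_ne_zero_of_mul_eq_zero (hS : IsSymmetricComposition mul n) {x w : S}
    (hx : polar n x (mul x x) ≠ 0) (hw : w ≠ 0) (hxw : mul x w = 0) : mul (mul x x) w ≠ 0 := by
  have h := hS.mul_mul_add_mul_mul_left x w (mul x x)
  rw [hxw, map_zero, LinearMap.zero_apply, zero_add] at h
  intro h0
  rw [h0, map_zero, LinearMap.zero_apply] at h
  exact smul_ne_zero hx hw h.symm

theorem mul_mul_self_mul_of_isotropic (hS : IsSymmetricComposition mul n) {x : S}
    (hx : n x = 0) (w : S) : mul x (mul (mul x x) w) = polar n x w • mul x x := by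
  rw [← hS.mul_mul_add_mul_mul_right, hS.mul_mul_self_left, hx, zero_smul, map_zero, add_zero]

end IsSymmetricComposition

structure IsGrading {k S G : Type*} [Field k] [AddCommGroup S] [Module k S] [Group G]
    [DecidableEq G] (mul : S →ₗ[k] S →ₗ[k] S) (A : G → Submodule k S) : Prop where
  isInternal : DirectSum.IsInternal A
  mul_mem : ∀ g h : G, ∀ x ∈ A g, ∀ y ∈ A h, mul x y ∈ A (g * h)

namespace IsGrading

variable {k S G : Type*} [Field k] [AddCommGroup S] [Module k S] [Group G] [DecidableEq G]
  {mul : S →ₗ[k] S →ₗ[k] S} {n : QuadraticForm k S} {A : G → Submodule k S} {g h : G} {x y : S}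

theorem mul_eq_zero_of_mul_eq_one (hA : IsGrading mul A) (h1 : A 1 = ⊥) (hgh : g * h = 1)
    (hx : x ∈ A g) (hy : y ∈ A h) : mul x y = 0 := by
  simpa [hgh, h1] using hA.mul_mem _ _ _ hx _ hy

theorem isotropic_of_mem (hA : IsGrading mul A) (hS : IsSymmetricComposition mul n)
    (h1 : A 1 = ⊥) (hx : x ∈ A g) : n x = 0 := by
  have hxxx : n x • x ∈ A (g * g * g) :=
    hS.mul_mul_self_left x x ▸ hA.mul_mem _ _ _ (hA.mul_mem _ _ _ hx _ hx) _ hx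
  suffices n x • x = 0 by
    rcases smul_eq_zero.mp this with h | rfl
    · exact h
    · exact map_zero n
  by_cases hgg : g * g = 1
  · rw [← hS.mul_mul_self_left x x, hA.mul_eq_zero_of_mul_eq_one h1 hgg hx hx, map_zero,
      LinearMap.zero_apply]
  · by_contra h0
    have hg :=
      hA.isInternal.submodule_iSupIndep.eq_of_mem_of_mem (Submodule.smul_mem _ _ hx) hxxx h0
    exact hgg (mul_right_cancel (b := g) (by rw [one_mul]; exact hg.symm))

theorem polar_eq_zero_of_mul_ne_one (hA : IsGrading mul A) (hS : IsSymmetricComposition mul n)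
    (hgh : g * h ≠ 1) (hx : x ∈ A g) (hy : y ∈ A h) : polar n x y = 0 := by
  have hsum : mul (mul x x) y + mul (mul y x) x ∈ A g := by
    rw [hS.mul_mul_add_mul_mul_left]; exact Submodule.smul_mem _ _ hx
  have hz := hA.isInternal.submodule_iSupIndep.add_eq_zero_of_mem
    (a := g * g * h) (b := h * g * g)
    (fun e => hgh (mul_left_cancel (a := g) (by rw [mul_one, ← mul_assoc, ← e])))
    (fun e => hgh (mul_eq_one_comm.mp (mul_right_cancel (b := g) (by rw [one_mul, ← e]))))
    (hA.mul_mem _ _ _ (hA.mul_mem _ _ _ hx _ hx) _ hy)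
    (hA.mul_mem _ _ _ (hA.mul_mem _ _ _ hy _ hx) _ hx) hsum
  rw [hS.mul_mul_add_mul_mul_left] at hz
  rcases smul_eq_zero.mp hz with h | rfl
  · exact h
  · exact polar_zero_left n y

theorem exists_mem_inv_polar_ne_zero (hA : IsGrading mul A) (hS : IsSymmetricComposition mul n)
    (hx : x ∈ A g) (hx0 : x ≠ 0) : ∃ y ∈ A g⁻¹, polar n x y ≠ 0 := by
  by_contra! hno
  refine hx0 (hS.nondegenerate x fun z => ?_)
  have hz : z ∈ ⨆ i, A i := hA.isInternal.submodule_iSup_eq_top ▸ Submodule.mem_top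
  refine Submodule.iSup_induction (motive := fun z => polar n x z = 0) A hz (fun i w hw => ?_)
    (polar_zero_right n x) (fun u v hu hv => by rw [polar_add_right, hu, hv, add_zero])
  by_cases hgi : g * i = 1
  · exact hno w (eq_inv_of_mul_eq_one_right hgi ▸ hw)
  · exact hA.polar_eq_zero_of_mul_ne_one hS hgi hx hw

theorem inv_ne_bot (hA : IsGrading mul A) (hS : IsSymmetricComposition mul n) (hg : A g ≠ ⊥) :
    A g⁻¹ ≠ ⊥ := by
  obtain ⟨x, hx, hx0⟩ := Submodule.exists_mem_ne_zero_of_ne_bot hg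
  obtain ⟨y, hy, hxy⟩ := hA.exists_mem_inv_polar_ne_zero hS hx hx0
  exact (Submodule.ne_bot_iff _).mpr ⟨y, hy, fun h0 => hxy (by rw [h0, polar_zero_right])⟩

theorem mul_self_ne_zero (hA : IsGrading mul A) (hS : IsSymmetricComposition mul n)
    (h1 : A 1 = ⊥) (hx : x ∈ A g) (hx0 : x ≠ 0) : mul x x ≠ 0 := by
  obtain ⟨y, hy, hxy⟩ := hA.exists_mem_inv_polar_ne_zero hS hx hx0
  have h := hS.mul_mul_add_mul_mul_left x x y
  rw [hA.mul_eq_zero_of_mul_eq_one h1 (inv_mul_cancel g) hy hx, map_zero, LinearMap.zero_apply,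
    add_zero] at h
  intro h0
  rw [h0, map_zero, LinearMap.zero_apply] at h
  exact smul_ne_zero hxy hx0 h.symm

theorem polar_mul_self_ne_zero (hA : IsGrading mul A) (hS : IsSymmetricComposition mul n)
    (h1 : A 1 = ⊥) (hx : x ∈ A g) (hx0 : x ≠ 0) : polar n x (mul x x) ≠ 0 := by
  intro h0
  apply hA.mul_self_ne_zero hS h1 (hA.mul_mem _ _ _ hx _ hx) (hA.mul_self_ne_zero hS h1 hx hx0)
  rw [hS.mul_self_mul_mul_self_of_isotropic (hA.isotropic_of_mem hS h1 hx), h0, zero_smul]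

theorem pow_three_eq_one (hA : IsGrading mul A) (hS : IsSymmetricComposition mul n)
    (h1 : A 1 = ⊥) (hg : A g ≠ ⊥) : g ^ 3 = 1 := by
  obtain ⟨x, hx, hx0⟩ := Submodule.exists_mem_ne_zero_of_ne_bot hg
  have hxx := hA.mul_mem _ _ _ hx _ hx
  have h4 := hA.mul_mem _ _ _ hxx _ hxx
  rw [hS.mul_self_mul_mul_self_of_isotropic (hA.isotropic_of_mem hS h1 hx)] at h4
  have hg4 := hA.isInternal.submodule_iSupIndep.eq_of_mem_of_mem (Submodule.smul_mem _ _ hx) h4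
    (smul_ne_zero (hA.polar_mul_self_ne_zero hS h1 hx hx0) hx0)
  calc g ^ 3 = g⁻¹ * (g * g * (g * g)) := by rw [pow_three']; group
    _ = 1 := by rw [← hg4, inv_mul_cancel]

theorem orderOf_eq_three (hA : IsGrading mul A) (hS : IsSymmetricComposition mul n)
    (h1 : A 1 = ⊥) (hg : A g ≠ ⊥) : orderOf g = 3 :=
  orderOf_eq_prime (hA.pow_three_eq_one hS h1 hg) (by rintro rfl; exact hg h1)

theorem eq_span_singleton (hA : IsGrading mul A) (hS : IsSymmetricComposition mul n)
    (h1 : A 1 = ⊥) (hx : x ∈ A g) (hx0 : x ≠ 0) : A g = k ∙ x := by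
  have hg3 := hA.pow_three_eq_one hS h1 ((Submodule.ne_bot_iff _).mpr ⟨x, hx, hx0⟩)
  have hxx := hA.mul_mem _ _ _ hx _ hx
  refine le_antisymm (fun b hb => ?_) ((Submodule.span_singleton_le_iff_mem _ _).mpr hx)
  -- two evaluations of `(x * b) * (x * x)`
  have hleft : mul (mul x b) (mul x x) = polar n x (mul x x) • b := by
    rw [← hS.mul_mul_add_mul_mul_left, hA.mul_eq_zero_of_mul_eq_one h1
      ((pow_three' g).symm.trans hg3) hxx hb, map_zero, LinearMap.zero_apply, add_zero]
  have hright : mul (mul x b) (mul x x) = polar n (mul x b) x • x := by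
    rw [← hS.mul_mul_add_mul_mul_right, hA.mul_eq_zero_of_mul_eq_one h1
      ((pow_three g).symm.trans hg3) hx (hA.mul_mem _ _ _ hx _ hb), map_zero, add_zero]
  refine Submodule.mem_span_singleton.mpr ⟨(polar n x (mul x x))⁻¹ * polar n (mul x b) x, ?_⟩
  rw [mul_smul, ← hright, hleft, inv_smul_smul₀ (hA.polar_mul_self_ne_zero hS h1 hx hx0)]

theorem finrank_eq_one (hA : IsGrading mul A) (hS : IsSymmetricComposition mul n)
    (h1 : A 1 = ⊥) (hg : A g ≠ ⊥) : Module.finrank k (A g) = 1 := by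
  obtain ⟨x, hx, hx0⟩ := Submodule.exists_mem_ne_zero_of_ne_bot hg
  rw [hA.eq_span_singleton hS h1 hx hx0, finrank_span_singleton hx0]

theorem mul_ne_bot (hA : IsGrading mul A) (hS : IsSymmetricComposition mul n) (h1 : A 1 = ⊥)
    (hg : A g ≠ ⊥) (hh : A h ≠ ⊥) (hgh : g * h ≠ 1) : A (g * h) ≠ ⊥ := by
  obtain ⟨x, hx, hx0⟩ := Submodule.exists_mem_ne_zero_of_ne_bot hg
  obtain ⟨w, hw, hw0⟩ := Submodule.exists_mem_ne_zero_of_ne_bot hh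
  rw [Submodule.ne_bot_iff]
  by_cases hxw : mul x w = 0
  · -- then `(x * x) * ((x * x) * w)` is a nonzero element of degree `g ^ 4 * h = g * h`
    have hN := hA.polar_mul_self_ne_zero hS h1 hx hx0
    have hu := hS.mul_self_mul_ne_zero_of_mul_eq_zero hN hw0 hxw
    have hxu : mul x (mul (mul x x) w) = 0 := by
      rw [hS.mul_mul_self_mul_of_isotropic (hA.isotropic_of_mem hS h1 hx),
        hA.polar_eq_zero_of_mul_ne_one hS hgh hx hw, zero_smul]
    have hxx := hA.mul_mem _ _ _ hx _ hx
    have hmem := hA.mul_mem _ _ _ hxx _ (hA.mul_mem _ _ _ hxx _ hw)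
    have hdeg : g * g * (g * g * h) = g * h := by
      calc g * g * (g * g * h) = g ^ 3 * (g * h) := by rw [pow_three']; group
        _ = g * h := by rw [hA.pow_three_eq_one hS h1 hg, one_mul]
    exact ⟨_, hdeg ▸ hmem, hS.mul_self_mul_ne_zero_of_mul_eq_zero hN hu hxu⟩
  · exact ⟨_, hA.mul_mem _ _ _ hx _ hw, hxw⟩

theorem mul_eq_zero_of_mem_inv (hA : IsGrading mul A) (hS : IsSymmetricComposition mul n)
    (h1 : A 1 = ⊥) (hx : x ∈ A g) {w v : S} (hw : w ∈ A h) (hxw : mul x w ≠ 0)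
    (hv : v ∈ A h⁻¹) : mul x v = 0 := by
  obtain ⟨z, hz, hpol⟩ := hA.exists_mem_inv_polar_ne_zero hS (hA.mul_mem _ _ _ hx _ hw) hxw
  rw [hS.polar_mul_left_eq_polar_mul_right] at hpol
  have hzx : mul z x ≠ 0 := fun h0 => hpol (by rw [h0, polar_zero_right])
  have hzx_mem : mul z x ∈ A h⁻¹ := by simpa using hA.mul_mem _ _ _ hz _ hx
  obtain ⟨c, rfl⟩ := Submodule.mem_span_singleton.mp (hA.eq_span_singleton hS h1 hzx_mem hzx ▸ hv)
  rw [map_smul, hS.mul_mul_self_right, hA.isotropic_of_mem hS h1 hx, zero_smul, smul_zero]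

theorem exists_notMem_zpowers_forall_mul_eq_zero (hA : IsGrading mul A)
    (hS : IsSymmetricComposition mul n) (h1 : A 1 = ⊥) (hx : x ∈ A g) (hh : A h ≠ ⊥)
    (hhg : h ∉ zpowers g) :
    ∃ h' : G, A h' ≠ ⊥ ∧ h' ∉ zpowers g ∧ ∀ w ∈ A h', mul x w = 0 := by
  by_cases hxh : ∀ w ∈ A h, mul x w = 0
  · exact ⟨h, hh, hhg, hxh⟩
  · push Not at hxh
    obtain ⟨w, hw, hxw⟩ := hxh
    exact ⟨h⁻¹, hA.inv_ne_bot hS hh, by rwa [inv_mem_iff],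
      fun v hv => hA.mul_eq_zero_of_mem_inv hS h1 hx hw hxw hv⟩

theorem polar_eq_zero_of_notMem_zpowers (hA : IsGrading mul A)
    (hS : IsSymmetricComposition mul n) (h1 : A 1 = ⊥) (hx : x ∈ A g) {y : S} (hy : y ∈ A h)
    (hy0 : y ≠ 0) (hhg : h ∉ zpowers g) :
    ∀ a ∈ ({x, mul x x} : Set S), ∀ b ∈ ({y, mul y y} : Set S), polar n a b = 0 := by
  have hh : A h ≠ ⊥ := (Submodule.ne_bot_iff _).mpr ⟨y, hy, hy0⟩
  have hne {g' h' : G} (hg' : g' ∈ zpowers g) (hh' : h' ∈ zpowers h) (hh'0 : A h' ≠ ⊥) :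
      g' * h' ≠ 1 :=
    mul_ne_one_of_notMem_zpowers (hA.orderOf_eq_three hS h1 hh) hhg hg' hh'
      (by rintro rfl; exact hh'0 h1)
  have hgg : g * g ∈ zpowers g := Subgroup.mul_mem _ (mem_zpowers g) (mem_zpowers g)
  have hhh : h * h ∈ zpowers h := Subgroup.mul_mem _ (mem_zpowers h) (mem_zpowers h)
  have hxx := hA.mul_mem _ _ _ hx _ hx
  have hyy := hA.mul_mem _ _ _ hy _ hy
  have hhh0 : A (h * h) ≠ ⊥ :=
    (Submodule.ne_bot_iff _).mpr ⟨_, hyy, hA.mul_self_ne_zero hS h1 hy hy0⟩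
  rintro a (rfl | rfl) b (rfl | rfl)
  · exact hA.polar_eq_zero_of_mul_ne_one hS (hne (mem_zpowers g) (mem_zpowers h) hh) hx hy
  · exact hA.polar_eq_zero_of_mul_ne_one hS (hne (mem_zpowers g) hhh hhh0) hx hyy
  · exact hA.polar_eq_zero_of_mul_ne_one hS (hne hgg (mem_zpowers h) hh) hxx hy
  · exact hA.polar_eq_zero_of_mul_ne_one hS (hne hgg hhh hhh0) hxx hyy

def supportSubgroup (hA : IsGrading mul A) (hS : IsSymmetricComposition mul n) (h1 : A 1 = ⊥) :
    Subgroup G where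
  carrier := {g | A g ≠ ⊥} ∪ {1}
  one_mem' := Or.inr rfl
  mul_mem' := by
    rintro a b (ha | rfl) (hb | rfl)
    · by_cases hab : a * b = 1
      · exact Or.inr hab
      · exact Or.inl (hA.mul_ne_bot hS h1 ha hb hab)
    · rw [mul_one]; exact Or.inl ha
    · rw [one_mul]; exact Or.inl hb
    · simp
  inv_mem' := by
    rintro a (ha | rfl)
    · exact Or.inl (hA.inv_ne_bot hS ha)
    · simp

theorem card_supportSubgroup [FiniteDimensional k S] (hA : IsGrading mul A)
    (hS : IsSymmetricComposition mul n) (h1 : A 1 = ⊥) :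
    Nat.card (hA.supportSubgroup hS h1) = Module.finrank k S + 1 := by
  have hfin : {g : G | A g ≠ ⊥}.Finite :=
    @Finite.of_fintype _ hA.isInternal.submodule_iSupIndep.fintypeNeBotOfFiniteDimensional
  rw [← hA.isInternal.ncard_ne_bot_eq_finrank fun _ => hA.finrank_eq_one hS h1,
    ← Set.ncard_insert_of_notMem (a := 1) (by simp [h1]) hfin, ← Set.union_singleton]
  rfl

theorem pow_three_eq_one_of_mem_supportSubgroup (hA : IsGrading mul A)
    (hS : IsSymmetricComposition mul n) (h1 : A 1 = ⊥) (a : hA.supportSubgroup hS h1) :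
    a ^ 3 = 1 := by
  obtain ⟨a, ha | rfl⟩ := a
  · exact Subtype.ext (hA.pow_three_eq_one hS h1 ha)
  · exact one_pow 3

end IsGrading

theorem okubo_grading_trivial_identity_component_general
    {k : Type*} [Field k] {S : Type*} [AddCommGroup S] [Module k S]
    (mul : S →ₗ[k] S →ₗ[k] S) (n : QuadraticForm k S)
    (hnondeg : ∀ x : S, (∀ y : S, polar n x y = 0) → x = 0)
    (hcomp : ∀ x y : S, n (mul x y) = n x * n y)
    (hassoc : ∀ x y z : S, polar n (mul x y) z = polar n x (mul y z))
    (hdim : Module.finrank k S = 8)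
    {G : Type*} [Group G] [DecidableEq G]
    (A : G → Submodule k S)
    (hdecomp : DirectSum.IsInternal A)
    (hgrmul : ∀ g h : G, ∀ x ∈ A g, ∀ y ∈ A h, mul x y ∈ A (g * h))
    (h1 : A 1 = ⊥) :
    (∀ g : G, A g ≠ ⊥ → orderOf g = 3) ∧
    (∀ g : G, A g ≠ ⊥ → Module.finrank k (A g) = 1) ∧
    Set.ncard {g : G | A g ≠ ⊥} = 8 ∧
    ∃ H : Subgroup G,
      (H : Set G) = {g : G | A g ≠ ⊥} ∪ {1} ∧
      Nonempty (H ≃* Multiplicative (ZMod 3 × ZMod 3)) ∧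
      ∃ g h : G, A g ≠ ⊥ ∧ A h ≠ ⊥ ∧ Subgroup.closure {g, h} = H ∧
        ∃ x y : S,
          A g = Submodule.span k {x} ∧ A h = Submodule.span k {y} ∧
          n x = 0 ∧ polar n x (mul x x) ≠ 0 ∧
          n y = 0 ∧ polar n y (mul y y) ≠ 0 ∧
          (∀ a ∈ ({x, mul x x} : Set S), ∀ b ∈ ({y, mul y y} : Set S),
            polar n a b = 0) ∧
          mul x y = 0 := by
  have hS : IsSymmetricComposition mul n := ⟨hnondeg, hcomp, hassoc⟩
  have hA : IsGrading mul A := ⟨hdecomp, hgrmul⟩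
  have : FiniteDimensional k S := .of_finrank_pos (by rw [hdim]; norm_num)
  set H := hA.supportSubgroup hS h1
  have hH : Nat.card H = 3 ^ 2 := by rw [hA.card_supportSubgroup hS h1, hdim]; rfl
  have hcard : {g : G | A g ≠ ⊥}.ncard = 8 :=
    hdim ▸ hdecomp.ncard_ne_bot_eq_finrank fun _ => hA.finrank_eq_one hS h1
  obtain ⟨g, hg⟩ := Set.nonempty_of_ncard_ne_zero (s := {g : G | A g ≠ ⊥}) (by rw [hcard]; simp)
  obtain ⟨x, hx, hx0⟩ := Submodule.exists_mem_ne_zero_of_ne_bot hg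
  have hgH : zpowers g < H := by
    refine lt_of_le_of_ne (zpowers_le.mpr (Or.inl hg)) fun e => ?_
    have := congrArg (fun K : Subgroup G => Nat.card K) e
    rw [Nat.card_zpowers, hA.orderOf_eq_three hS h1 hg, hH] at this
    norm_num at this
  obtain ⟨h₀, hh₀H, hh₀g⟩ := SetLike.exists_of_lt hgH
  have hh₀ : A h₀ ≠ ⊥ := hh₀H.resolve_right (fun e => hh₀g (e ▸ one_mem _))
  obtain ⟨h, hh, hhg, hxh⟩ := hA.exists_notMem_zpowers_forall_mul_eq_zero hS h1 hx hh₀ hh₀g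
  obtain ⟨y, hy, hy0⟩ := Submodule.exists_mem_ne_zero_of_ne_bot hh
  exact ⟨fun _ => hA.orderOf_eq_three hS h1, fun _ => hA.finrank_eq_one hS h1, hcard, H, rfl,
    nonempty_mulEquiv_zmod_prod hH (hA.pow_three_eq_one_of_mem_supportSubgroup hS h1), g, h, hg,
    hh, closure_pair_eq_of_card_eq_prime_sq hH (Or.inl hg) (Or.inl hh) (fun e => hg (e ▸ h1))
    hhg, x, y, hA.eq_span_singleton hS h1 hx hx0, hA.eq_span_singleton hS h1 hy hy0,
    hA.isotropic_of_mem hS h1 hx, hA.polar_mul_self_ne_zero hS h1 hx hx0,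
    hA.isotropic_of_mem hS h1 hy, hA.polar_mul_self_ne_zero hS h1 hy hy0,
    hA.polar_eq_zero_of_notMem_zpowers hS h1 hx hy hy0 hhg, hxh y hy⟩

/-- a group grading of an Okubo algebra with trivial identity
component has all support elements of order 3, one-dimensional homogeneous
components, support of cardinality 8, and support ∪ {1} a subgroup isomorphic
to ℤ₃ × ℤ₃, generated by two support elements `g, h` whose components are
spanned by a standard pair `(x, y)`. -/
theorem okubo_grading_trivial_identity_component
    {k : Type*} [Field k] {S : Type*} [AddCommGroup S] [Module k S]
    (mul : S →ₗ[k] S →ₗ[k] S) (n : QuadraticForm k S)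
    (hnondeg : ∀ x : S, (∀ y : S, polar n x y = 0) → x = 0)
    (hcomp : ∀ x y : S, n (mul x y) = n x * n y)
    (hassoc : ∀ x y z : S, polar n (mul x y) z = polar n x (mul y z))
    (hdim : Module.finrank k S = 8)
    (hnopara : ¬ ∃ e : S, ∀ x : S,
      mul e x = polar n e x • e - x ∧ mul x e = polar n e x • e - x)
    {G : Type*} [Group G] [DecidableEq G]
    (A : G → Submodule k S)
    (hdecomp : DirectSum.IsInternal A)
    (hgrmul : ∀ g h : G, ∀ x ∈ A g, ∀ y ∈ A h, mul x y ∈ A (g * h))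
    (h1 : A 1 = ⊥) :
    (∀ g : G, A g ≠ ⊥ → orderOf g = 3) ∧
    (∀ g : G, A g ≠ ⊥ → Module.finrank k (A g) = 1) ∧
    Set.ncard {g : G | A g ≠ ⊥} = 8 ∧
    ∃ H : Subgroup G,
      (H : Set G) = {g : G | A g ≠ ⊥} ∪ {1} ∧
      Nonempty (H ≃* Multiplicative (ZMod 3 × ZMod 3)) ∧
      ∃ g h : G, A g ≠ ⊥ ∧ A h ≠ ⊥ ∧ Subgroup.closure {g, h} = H ∧
        ∃ x y : S,
          A g = Submodule.span k {x} ∧ A h = Submodule.span k {y} ∧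
          n x = 0 ∧ polar n x (mul x x) ≠ 0 ∧
          n y = 0 ∧ polar n y (mul y y) ≠ 0 ∧
          (∀ a ∈ ({x, mul x x} : Set S), ∀ b ∈ ({y, mul y y} : Set S),
            polar n a b = 0) ∧
          mul x y = 0 :=
  okubo_grading_trivial_identity_component_general mul n hnondeg hcomp hassoc hdim A hdecomp hgrmul
    h1
end

section
/- Let (C,·,n) be a Cayley algebra over a field k of characteristic ≠ 2, 3, equipped with a grading C = ⊕_{μ∈Z₂³} C_μ by the group Z₂³ = (Z/2)³ in which every homogeneous component C_μ is one-dimensional. For μ ∈ Z₂³ set o(C,n)_μ := {d ∈ o(C,n) : d(C_γ) ⊆ C_{γ+μ} for all γ ∈ Z₂³}. Then o(C,n) = ⊕_{μ∈Z₂³} o(C,n)_μ is a grading of the Lie algebra o(C,n), o(C,n)_0 = 0, and for every μ ≠ 0 the subspace o(C,n)_μ is a 4-dimensional Cartan subalgebra of o(C,n) (an abelian, hence nilpotent, self-normalizing Lie subalgebra). -/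
/-!
A grading of `C` by `G = ℤ₂³` with one-dimensional components is a basis `(b γ)` of homogeneous
elements. The unit lies in degree `0`, and comparing degrees in the Cayley–Hamilton equation
`x² = n(x, 1) x - n(x) 1` shows `n(b γ, 1) = 0` for `γ ≠ 0`; the linearised composition law
`n(xy, zw) + n(zy, xw) = n(x, z) n(y, w)` with `z = w = 1` then makes distinct `b γ` orthogonal,
and nondegeneracy makes each `b γ` anisotropic.

In such a basis an endomorphism of degree `μ` has its matrix supported on the pairs
`(γ + μ, γ)`, and since `γ ↦ γ + μ` is an involution, skewness only couples the two entries
of each orbit `{γ, γ + μ}`. Everything now follows from these entries: the skew part of each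
degree is again skew, a degree-`0` skew map has zero diagonal, two maps of degree `μ ≠ 0`
have diagonal products with equal entries, `o(C,n)_μ` has one free entry per orbit, and the
rank-two skew maps `x ↦ n(b β, x) b (β + μ) - n(b (β + μ), x) b β` detect every entry of a
normaliser of `o(C,n)_μ` outside the support of degree `μ`.
-/

open QuadraticMap

section Hurwitz

variable {R C : Type*} [CommRing R] [AddCommGroup C] [Module R C]
  {mul : C →ₗ[R] C →ₗ[R] C} {n : QuadraticForm R C}

theorem polar_mul_mul_left (hcomp : ∀ x y, n (mul x y) = n x * n y) (x y w : C) :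
    polar n (mul x y) (mul x w) = n x * polar n y w := by
  simp only [polar, ← map_add, hcomp]
  ring

theorem polar_mul_mul_add_polar_mul_mul (hcomp : ∀ x y, n (mul x y) = n x * n y)
    (x y z w : C) :
    polar n (mul x y) (mul z w) + polar n (mul z y) (mul x w) = polar n x z * polar n y w := by
  have h := polar_mul_mul_left hcomp (x + z) y w
  simp only [map_add, LinearMap.add_apply, polar_add_left, polar_add_right,
    polar_mul_mul_left hcomp] at h
  have hxz : polar n x z = n (x + z) - n x - n z := rfl
  rw [hxz]
  linear_combination h

theorem mul_self_eq_polar_smul_sub_smul (hn : (polarBilin n).SeparatingLeft)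
    (hcomp : ∀ x y, n (mul x y) = n x * n y) {e : C} (hle : ∀ x, mul e x = x)
    (hre : ∀ x, mul x e = x) (x : C) :
    mul x x = polar n x e • x - n x • e := by
  refine sub_eq_zero.mp (hn _ fun w => ?_)
  have h1 := polar_mul_mul_add_polar_mul_mul hcomp x x e w
  have h2 := polar_mul_mul_left hcomp x e w
  rw [hle, hle] at h1
  rw [hre] at h2
  simp only [polarBilin_apply_apply, polar_sub_left, polar_smul_left, smul_eq_mul]
  linear_combination h1 - h2

end Hurwitz

namespace Module.Basis

variable {ι R M : Type*} [Semiring R] [AddCommMonoid M] [Module R M] (b : Basis ι R M)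
  {x : M} {i : ι}

theorem mem_span_singleton_iff_repr_eq_zero :
    x ∈ R ∙ b i ↔ ∀ j ≠ i, b.repr x j = 0 := by
  constructor
  · rintro hx j hj
    obtain ⟨c, rfl⟩ := Submodule.mem_span_singleton.mp hx
    rw [map_smul, b.repr_self, Finsupp.smul_apply, Finsupp.single_eq_of_ne hj, smul_zero]
  · intro hx
    have : b.repr x = Finsupp.single i (b.repr x i) := by
      ext j
      rcases eq_or_ne j i with rfl | hj
      · rw [Finsupp.single_eq_same]
      · rw [hx j hj, Finsupp.single_eq_of_ne hj]
    rw [← b.repr.symm_apply_apply x, this, b.repr_symm_single]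
    exact Submodule.smul_mem _ _ (Submodule.mem_span_singleton_self _)

theorem eq_repr_smul_of_mem_span_singleton (hx : x ∈ R ∙ b i) : x = b.repr x i • b i := by
  obtain ⟨c, rfl⟩ := Submodule.mem_span_singleton.mp hx
  rw [map_smul, b.repr_self, Finsupp.smul_apply, Finsupp.single_eq_same, smul_eq_mul, mul_one]

end Module.Basis

theorem DirectSum.IsInternal.exists_basis_eq_span {ι k C : Type*} [DecidableEq ι] [Field k]
    [AddCommGroup C] [Module k C] {A : ι → Submodule k C} (h : IsInternal A)
    (hA : ∀ i, Module.finrank k (A i) = 1) : ∃ b : Module.Basis ι k C, A = fun i => k ∙ b i := by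
  let b := (h.collectedBasis fun i => Module.basisUnique Unit (hA i)).reindex
    (Equiv.sigmaUnique _ _)
  have hb : ∀ i, b i ∈ A i := fun i => by
    simp only [b, Module.Basis.reindex_apply]
    exact h.collectedBasis_mem (fun i => Module.basisUnique Unit (hA i))
      ((Equiv.sigmaUnique _ _).symm i)
  refine ⟨b, funext fun i => ?_⟩
  have := FiniteDimensional.of_finrank_eq_succ (hA i)
  refine (Submodule.eq_of_le_of_finrank_eq ?_ ?_).symm
  · exact (Submodule.span_singleton_le_iff_mem _ _).mpr (hb i)
  · rw [finrank_span_singleton (b.ne_zero i), hA i]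

section GradedHurwitz

variable {k C G : Type*} [Field k] [AddCommGroup C] [Module k C] [AddCommGroup G] [Fintype G]
  {mul : C →ₗ[k] C →ₗ[k] C} {n : QuadraticForm k C} {b : Module.Basis G k C}
  {e : C}

theorem unit_mem_span_basis_zero (hgr : ∀ g h, mul (b g) (b h) ∈ k ∙ b (g + h))
    (hle : ∀ x, mul e x = x) (hre : ∀ x, mul x e = x) : e ∈ k ∙ b 0 := by
  have expand : ∀ y, mul e y = ∑ h, b.repr e h • mul (b h) y := fun y => by
    conv_lhs => rw [← b.sum_repr e]
    simp only [map_sum, map_smul, LinearMap.sum_apply, LinearMap.smul_apply]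
  -- comparing the components of degree `h + γ` in `b γ = e * b γ`
  have kill : ∀ h ≠ 0, ∀ γ, b.repr e h • mul (b h) (b γ) = 0 := by
    intro h hh γ
    have hcoord := congrArg (fun x => b.repr x (h + γ)) (expand (b γ))
    simp only [hle, b.repr_self, map_sum, map_smul, Finsupp.coe_finsetSum, Finset.sum_apply,
      Finsupp.smul_apply, smul_eq_mul] at hcoord
    rw [Finsupp.single_eq_of_ne (by simpa using hh), Finset.sum_eq_single h] at hcoord
    · rw [b.eq_repr_smul_of_mem_span_singleton (hgr h γ), smul_smul, ← hcoord, zero_smul]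
    · intro h' _ hh'
      rw [b.mem_span_singleton_iff_repr_eq_zero.mp (hgr h' γ) _ (by simpa using hh'.symm),
        mul_zero]
    · simp
  refine b.mem_span_singleton_iff_repr_eq_zero.mpr fun h hh => ?_
  have hzero : b.repr e h • b h = 0 :=
    calc b.repr e h • b h = b.repr e h • mul (b h) (∑ γ, b.repr e γ • b γ) := by
          rw [b.sum_repr, hre]
      _ = ∑ γ, b.repr e γ • (b.repr e h • mul (b h) (b γ)) := by
          rw [map_sum, Finset.smul_sum]
          exact Finset.sum_congr rfl fun γ _ => by rw [map_smul, smul_comm]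
      _ = 0 := Finset.sum_eq_zero fun γ _ => by rw [kill h hh γ, smul_zero]
  exact (smul_eq_zero.mp hzero).resolve_right (b.ne_zero h)

theorem polar_basis_unit_eq_zero (hG : ∀ g : G, g + g = 0) (hn : (polarBilin n).SeparatingLeft)
    (hcomp : ∀ x y, n (mul x y) = n x * n y) (hle : ∀ x, mul e x = x) (hre : ∀ x, mul x e = x)
    (hgr : ∀ g h, mul (b g) (b h) ∈ k ∙ b (g + h)) {γ : G} (hγ : γ ≠ 0) :
    polar n (b γ) e = 0 := by
  have hsq := hgr γ γ
  rw [hG, mul_self_eq_polar_smul_sub_smul hn hcomp hle hre] at hsq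
  have hcoord := b.mem_span_singleton_iff_repr_eq_zero.mp hsq γ hγ
  rwa [map_sub, map_smul, map_smul, Finsupp.sub_apply, Finsupp.smul_apply, Finsupp.smul_apply,
    b.repr_self, Finsupp.single_eq_same,
    b.mem_span_singleton_iff_repr_eq_zero.mp (unit_mem_span_basis_zero hgr hle hre) γ hγ,
    smul_eq_mul, smul_zero, mul_one, sub_zero] at hcoord

theorem isOrthoᵢ_polarBilin_basis (hG : ∀ g : G, g + g = 0) (hn : (polarBilin n).SeparatingLeft)
    (hcomp : ∀ x y, n (mul x y) = n x * n y) (hle : ∀ x, mul e x = x) (hre : ∀ x, mul x e = x)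
    (hgr : ∀ g h, mul (b g) (b h) ∈ k ∙ b (g + h)) : LinearMap.IsOrthoᵢ (polarBilin n) b := by
  intro γ δ hγδ
  have h := polar_mul_mul_add_polar_mul_mul hcomp (b γ) (b δ) e e
  have hsum : γ + δ ≠ 0 := fun h0 => hγδ (by rw [← add_right_cancel_iff (a := δ), h0, hG])
  have hprod : polar n (mul (b γ) (b δ)) e = 0 := by
    rw [b.eq_repr_smul_of_mem_span_singleton (hgr γ δ), polar_smul_left,
      polar_basis_unit_eq_zero hG hn hcomp hle hre hgr hsum, smul_zero]
  have htrace : polar n (b γ) e * polar n (b δ) e = 0 := by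
    rcases eq_or_ne γ 0 with rfl | hγ
    · rw [polar_basis_unit_eq_zero hG hn hcomp hle hre hgr (Ne.symm hγδ), mul_zero]
    · rw [polar_basis_unit_eq_zero hG hn hcomp hle hre hgr hγ, zero_mul]
  simp only [hle, hre] at h
  rw [hprod, htrace, zero_add] at h
  rw [Function.onFun, polarBilin_apply_apply, polar_comm]
  exact h

end GradedHurwitz

section SkewAdjoint

variable {R M ι : Type*} [CommRing R] [AddCommGroup M] [Module R M]
  {B : LinearMap.BilinForm R M} {b : Module.Basis ι R M}

theorem mem_skewAdjointSubmodule_iff {d : Module.End R M} :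
    d ∈ B.skewAdjointSubmodule ↔ ∀ x y, B (d x) y + B x (d y) = 0 := by
  rw [LinearMap.mem_skewAdjointSubmodule]
  refine forall₂_congr fun x y => ?_
  rw [Pi.neg_apply, map_neg, eq_neg_iff_add_eq_zero]

theorem mem_skewAdjointSubmodule_iff_basis (b : Module.Basis ι R M) {d : Module.End R M} :
    d ∈ B.skewAdjointSubmodule ↔ ∀ γ δ, B (d (b γ)) (b δ) + B (b γ) (d (b δ)) = 0 := by
  rw [mem_skewAdjointSubmodule_iff]
  refine ⟨fun h γ δ => h _ _, fun h x y => ?_⟩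
  have hzero : B ∘ₗ d + B.compl₂ d = 0 := LinearMap.ext_basis b b fun γ δ => h γ δ
  simpa using LinearMap.congr_fun₂ hzero x y

theorem LinearMap.IsOrthoᵢ.apply_basis_right [Fintype ι] (hB : LinearMap.IsOrthoᵢ B b) (x : M)
    (δ : ι) : B x (b δ) = b.repr x δ * B (b δ) (b δ) := by
  conv_lhs => rw [← b.sum_repr x]
  rw [map_sum, LinearMap.sum_apply, Finset.sum_eq_single δ]
  · rw [map_smul, LinearMap.smul_apply, smul_eq_mul]
  · intro γ _ hγ
    rw [map_smul, LinearMap.smul_apply, hB hγ, smul_zero]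
  · simp

theorem LinearMap.IsOrthoᵢ.apply_basis_left [Fintype ι] (hB : LinearMap.IsOrthoᵢ B b) (x : M)
    (δ : ι) : B (b δ) x = b.repr x δ * B (b δ) (b δ) := by
  conv_lhs => rw [← b.sum_repr x]
  rw [map_sum, Finset.sum_eq_single δ]
  · rw [map_smul, smul_eq_mul]
  · intro γ _ hγ
    rw [map_smul, hB hγ.symm, smul_zero]
  · simp

theorem repr_mul_add_repr_mul_eq_zero [Fintype ι] (hB : LinearMap.IsOrthoᵢ B b)
    {d : Module.End R M} (hd : d ∈ B.skewAdjointSubmodule) (γ δ : ι) :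
    b.repr (d (b γ)) δ * B (b δ) (b δ) + b.repr (d (b δ)) γ * B (b γ) (b γ) = 0 := by
  rw [← hB.apply_basis_right, ← hB.apply_basis_left]
  exact (mem_skewAdjointSubmodule_iff_basis b).mp hd γ δ

/-- Corresponds to `u ∧ v` under `o(B) ≅ Λ²M`. -/
def wedgeEnd (B : LinearMap.BilinForm R M) (u v : M) : Module.End R M :=
  (B u).smulRight v - (B v).smulRight u

theorem wedgeEnd_apply (u v x : M) : wedgeEnd B u v x = B u x • v - B v x • u := rfl

theorem wedgeEnd_mem_skewAdjointSubmodule (hs : B.IsSymm) (u v : M) :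
    wedgeEnd B u v ∈ B.skewAdjointSubmodule := by
  refine mem_skewAdjointSubmodule_iff.mpr fun x y => ?_
  simp only [wedgeEnd_apply, map_sub, map_smul, LinearMap.sub_apply, LinearMap.smul_apply,
    smul_eq_mul, LinearMap.BilinForm.isSymm_def.mp hs x u,
    LinearMap.BilinForm.isSymm_def.mp hs x v]
  ring

theorem wedgeEnd_basis_apply_of_ne (hB : LinearMap.IsOrthoᵢ B b) {α β β' : ι} (hβ : α ≠ β)
    (hβ' : α ≠ β') : wedgeEnd B (b β) (b β') (b α) = 0 := by
  rw [wedgeEnd_apply, hB hβ.symm, hB hβ'.symm, zero_smul, zero_smul, sub_zero]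

theorem wedgeEnd_basis_apply_self (hB : LinearMap.IsOrthoᵢ B b) {β β' : ι} (h : β ≠ β') :
    wedgeEnd B (b β) (b β') (b β) = B (b β) (b β) • b β' := by
  rw [wedgeEnd_apply, hB h.symm, zero_smul, sub_zero]

end SkewAdjoint

section HalfCount

variable {G : Type*} [AddCommGroup G] [Fintype G] {μ : G}

theorem exists_finset_add_mem_iff_notMem (hG : ∀ g : G, g + g = 0) (hμ : μ ≠ 0) :
    ∃ R : Finset G, ∀ γ, γ + μ ∈ R ↔ γ ∉ R := by
  classical
  let f := Fintype.equivFin G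
  refine ⟨Finset.univ.filter fun γ => f γ < f (γ + μ), fun γ => ?_⟩
  have hne : f (γ + μ) ≠ f γ := f.injective.ne fun h => hμ (by simpa using h)
  simp only [Finset.mem_filter, Finset.mem_univ, true_and, add_assoc, hG, add_zero, not_lt]
  exact ⟨le_of_lt, fun h => lt_of_le_of_ne h hne⟩

theorem two_mul_card_eq_of_add_mem_iff_notMem [DecidableEq G] {R : Finset G}
    (hR : ∀ γ, γ + μ ∈ R ↔ γ ∉ R) : 2 * R.card = Fintype.card G := by
  have hcompl : Rᶜ.card = R.card := Finset.card_equiv (Equiv.addRight μ) fun γ => by simp [hR]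
  rw [← R.card_add_card_compl, hcompl, two_mul]

end HalfCount

section HomogeneousEnd

variable {k C G : Type*} [Field k] [AddCommGroup C] [Module k C] [AddCommGroup G]

def homogeneousEnd (A : G → Submodule k C) (μ : G) : Submodule k (Module.End k C) :=
  ⨅ γ, (A γ).compatibleMaps (A (γ + μ))

theorem mem_homogeneousEnd {A : G → Submodule k C} {μ : G} {d : Module.End k C} :
    d ∈ homogeneousEnd A μ ↔ ∀ γ, ∀ z ∈ A γ, d z ∈ A (γ + μ) :=
  Submodule.mem_iInf _

/-- The paper's `o(C,n)_μ`, for an arbitrary bilinear form `B`. -/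
def skewHomogeneousEnd (B : LinearMap.BilinForm k C) (A : G → Submodule k C) (μ : G) :
    Submodule k (Module.End k C) :=
  B.skewAdjointSubmodule ⊓ homogeneousEnd A μ

theorem mul_sub_mul_mem_skewHomogeneousEnd {B : LinearMap.BilinForm k C} {A : G → Submodule k C}
    {μ ν : G} {d d' : Module.End k C} (hd : d ∈ skewHomogeneousEnd B A μ)
    (hd' : d' ∈ skewHomogeneousEnd B A ν) :
    d * d' - d' * d ∈ skewHomogeneousEnd B A (μ + ν) := by
  refine ⟨B.isSkewAdjoint_bracket hd.1 hd'.1, mem_homogeneousEnd.mpr fun γ z hz => ?_⟩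
  have h1 := mem_homogeneousEnd.mp hd.2 _ _ (mem_homogeneousEnd.mp hd'.2 γ z hz)
  have h2 := mem_homogeneousEnd.mp hd'.2 _ _ (mem_homogeneousEnd.mp hd.2 γ z hz)
  rw [add_right_comm, add_assoc] at h1
  rw [add_assoc] at h2
  exact Submodule.sub_mem _ h1 h2

end HomogeneousEnd

section HomogeneousBasis

variable {k C G : Type*} [Field k] [AddCommGroup C] [Module k C] [AddCommGroup G]
  {B : LinearMap.BilinForm k C} {b : Module.Basis G k C} {μ : G} {d d' : Module.End k C}
  {R : Finset G}

theorem mem_homogeneousEnd_span_iff :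
    d ∈ homogeneousEnd (fun γ => k ∙ b γ) μ ↔ ∀ γ, d (b γ) ∈ k ∙ b (γ + μ) := by
  refine mem_homogeneousEnd.trans ⟨fun h γ => h γ _ (Submodule.mem_span_singleton_self _),
    fun h γ z hz => ?_⟩
  obtain ⟨c, rfl⟩ := Submodule.mem_span_singleton.mp hz
  rw [map_smul]
  exact Submodule.smul_mem _ c (h γ)

theorem apply_basis_of_mem_homogeneousEnd (hd : d ∈ homogeneousEnd (fun γ => k ∙ b γ) μ)
    (γ : G) : d (b γ) = b.repr (d (b γ)) (γ + μ) • b (γ + μ) :=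
  b.eq_repr_smul_of_mem_span_singleton (mem_homogeneousEnd_span_iff.mp hd γ)

noncomputable def homogeneousComponent (b : Module.Basis G k C) (μ : G) (d : Module.End k C) :
    Module.End k C :=
  b.constr k fun γ => b.repr (d (b γ)) (γ + μ) • b (γ + μ)

theorem homogeneousComponent_apply_basis (γ : G) :
    homogeneousComponent b μ d (b γ) = b.repr (d (b γ)) (γ + μ) • b (γ + μ) :=
  b.constr_basis k _ γ

theorem homogeneousComponent_mem_homogeneousEnd :
    homogeneousComponent b μ d ∈ homogeneousEnd (fun γ => k ∙ b γ) μ :=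
  mem_homogeneousEnd_span_iff.mpr fun γ => by
    rw [homogeneousComponent_apply_basis]
    exact Submodule.smul_mem _ _ (Submodule.mem_span_singleton_self _)

theorem wedgeEnd_basis_mem_skewHomogeneousEnd (hG : ∀ g : G, g + g = 0) (hs : B.IsSymm)
    (hB : LinearMap.IsOrthoᵢ B b) (β : G) :
    wedgeEnd B (b β) (b (β + μ)) ∈ skewHomogeneousEnd B (fun γ => k ∙ b γ) μ := by
  refine ⟨wedgeEnd_mem_skewAdjointSubmodule hs _ _, mem_homogeneousEnd_span_iff.mpr fun α => ?_⟩
  rw [wedgeEnd_apply]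
  refine Submodule.sub_mem _ ?_ ?_
  · rcases eq_or_ne α β with rfl | h
    · exact Submodule.smul_mem _ _ (Submodule.mem_span_singleton_self _)
    · rw [hB (Ne.symm h), zero_smul]
      exact Submodule.zero_mem _
  · rcases eq_or_ne α (β + μ) with rfl | h
    · rw [add_assoc, hG, add_zero]
      exact Submodule.smul_mem _ _ (Submodule.mem_span_singleton_self _)
    · rw [hB (Ne.symm h), zero_smul]
      exact Submodule.zero_mem _

theorem exists_mem_skewHomogeneousEnd_repr_eq (hG : ∀ g : G, g + g = 0) (hs : B.IsSymm)
    (hB : LinearMap.IsOrthoᵢ B b) (hb : ∀ γ, B (b γ) (b γ) ≠ 0) (hμ : μ ≠ 0)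
    (hR : ∀ γ, γ + μ ∈ R ↔ γ ∉ R) (a : R → k) :
    ∃ d ∈ skewHomogeneousEnd B (fun γ => k ∙ b γ) μ,
      ∀ β : R, b.repr (d (b β)) (β + μ) = a β := by
  refine ⟨∑ β : R, (a β / B (b β) (b β)) • wedgeEnd B (b β) (b (β + μ)),
    Submodule.sum_mem _ fun β _ => Submodule.smul_mem _ _
      (wedgeEnd_basis_mem_skewHomogeneousEnd hG hs hB β), fun β' => ?_⟩
  have hμβ : ∀ β : G, β ≠ β + μ := fun β h => hμ (by simpa using h.symm)
  simp only [LinearMap.sum_apply, LinearMap.smul_apply, map_sum, map_smul,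
    Finsupp.finsetSum_apply, Finsupp.smul_apply, smul_eq_mul]
  rw [Finset.sum_eq_single β']
  · rw [wedgeEnd_basis_apply_self hB (hμβ β'), map_smul, b.repr_self, Finsupp.smul_apply,
      Finsupp.single_eq_same, smul_eq_mul, mul_one, div_mul_cancel₀ _ (hb β')]
  · intro β _ hββ'
    have hR' : (β' : G) ≠ β + μ := fun h => (hR β).mp (h ▸ β'.2) β.2
    rw [wedgeEnd_basis_apply_of_ne hB (fun h => hββ' (Subtype.ext h).symm) hR', map_zero,
      Finsupp.zero_apply, mul_zero]
  · simp

variable [Fintype G]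

theorem sum_homogeneousComponent : ∑ μ, homogeneousComponent b μ d = d := by
  refine b.ext fun γ => ?_
  simp only [LinearMap.sum_apply, homogeneousComponent_apply_basis]
  exact (Equiv.sum_comp (Equiv.addLeft γ) fun δ => b.repr (d (b γ)) δ • b δ).trans (b.sum_repr _)

theorem homogeneousComponent_sum {f : G → Module.End k C}
    (hf : ∀ ν, f ν ∈ homogeneousEnd (fun γ => k ∙ b γ) ν) (μ : G) :
    homogeneousComponent b μ (∑ ν, f ν) = f μ := by
  refine b.ext fun γ => ?_
  rw [homogeneousComponent_apply_basis, apply_basis_of_mem_homogeneousEnd (hf μ)]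
  congr 1
  rw [LinearMap.sum_apply, map_sum, Finsupp.finsetSum_apply, Finset.sum_eq_single μ]
  · intro ν _ hν
    exact b.mem_span_singleton_iff_repr_eq_zero.mp (mem_homogeneousEnd_span_iff.mp (hf ν) γ) _
      (by simpa using hν.symm)
  · simp

theorem homogeneousComponent_mem_skewAdjointSubmodule (hG : ∀ g : G, g + g = 0)
    (hB : LinearMap.IsOrthoᵢ B b) (hd : d ∈ B.skewAdjointSubmodule) :
    homogeneousComponent b μ d ∈ B.skewAdjointSubmodule := by
  rw [mem_skewAdjointSubmodule_iff_basis b] at hd ⊢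
  intro γ δ
  simp only [homogeneousComponent_apply_basis, map_smul, LinearMap.smul_apply, smul_eq_mul]
  by_cases hδ : δ = γ + μ
  · obtain rfl := hδ
    have hγ : γ + μ + μ = γ := by rw [add_assoc, hG, add_zero]
    rw [hγ, ← hB.apply_basis_right, ← hB.apply_basis_left]
    exact hd γ (γ + μ)
  · have hγ : γ ≠ δ + μ := fun h => hδ (by rw [h, add_assoc, hG, add_zero])
    rw [hB (Ne.symm hδ), hB hγ, mul_zero, mul_zero, add_zero]

theorem existsUnique_sum_mem_skewHomogeneousEnd (hG : ∀ g : G, g + g = 0)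
    (hB : LinearMap.IsOrthoᵢ B b) (hd : d ∈ B.skewAdjointSubmodule) :
    ∃! f : G → Module.End k C,
      (∀ μ, f μ ∈ skewHomogeneousEnd B (fun γ => k ∙ b γ) μ) ∧ d = ∑ μ, f μ := by
  refine ⟨fun μ => homogeneousComponent b μ d, ⟨fun μ => ⟨?_, ?_⟩, ?_⟩, ?_⟩
  · exact homogeneousComponent_mem_skewAdjointSubmodule hG hB hd
  · exact homogeneousComponent_mem_homogeneousEnd
  · exact sum_homogeneousComponent.symm
  · rintro f ⟨hf, rfl⟩
    exact funext fun μ => (homogeneousComponent_sum (fun ν => (hf ν).2) μ).symm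

theorem eq_zero_of_mem_skewHomogeneousEnd_zero (h2 : (2 : k) ≠ 0) (hB : LinearMap.IsOrthoᵢ B b)
    (hb : ∀ γ, B (b γ) (b γ) ≠ 0) (hd : d ∈ skewHomogeneousEnd B (fun γ => k ∙ b γ) 0) :
    d = 0 := by
  refine b.ext fun γ => ?_
  have hdiag := repr_mul_add_repr_mul_eq_zero hB hd.1 γ γ
  have hcoef : b.repr (d (b γ)) γ = 0 := by
    have : b.repr (d (b γ)) γ * (2 * B (b γ) (b γ)) = 0 := by linear_combination hdiag
    exact (mul_eq_zero.mp this).resolve_right (mul_ne_zero h2 (hb γ))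
  rw [apply_basis_of_mem_homogeneousEnd hd.2, add_zero, hcoef, zero_smul, LinearMap.zero_apply]

theorem mul_comm_of_mem_skewHomogeneousEnd (hG : ∀ g : G, g + g = 0)
    (hB : LinearMap.IsOrthoᵢ B b) (hb : ∀ γ, B (b γ) (b γ) ≠ 0)
    (hd : d ∈ skewHomogeneousEnd B (fun γ => k ∙ b γ) μ)
    (hd' : d' ∈ skewHomogeneousEnd B (fun γ => k ∙ b γ) μ) : d * d' = d' * d := by
  have hμμ : ∀ γ, γ + μ + μ = γ := fun γ => by rw [add_assoc, hG, add_zero]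
  -- both products are diagonal; their entries agree by the skew relations of `d` and `d'`
  have hprod : ∀ {f g}, f ∈ homogeneousEnd (fun γ => k ∙ b γ) μ →
      g ∈ homogeneousEnd (fun γ => k ∙ b γ) μ → ∀ γ,
      (f * g) (b γ) = (b.repr (g (b γ)) (γ + μ) * b.repr (f (b (γ + μ))) γ) • b γ := by
    intro f g hf hg γ
    have hfγ := apply_basis_of_mem_homogeneousEnd hf (γ + μ)
    rw [hμμ] at hfγ
    conv_lhs => rw [Module.End.mul_apply, apply_basis_of_mem_homogeneousEnd hg, map_smul, hfγ,
      smul_smul]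
  refine b.ext fun γ => ?_
  rw [hprod hd.2 hd'.2, hprod hd'.2 hd.2]
  congr 1
  refine mul_right_cancel₀ (hb γ) ?_
  linear_combination b.repr (d' (b γ)) (γ + μ) * repr_mul_add_repr_mul_eq_zero hB hd.1 γ (γ + μ)
    - b.repr (d (b γ)) (γ + μ) * repr_mul_add_repr_mul_eq_zero hB hd'.1 γ (γ + μ)

theorem mem_skewHomogeneousEnd_of_mul_sub_mul_mem (h2 : (2 : k) ≠ 0) (hG : ∀ g : G, g + g = 0)
    (hs : B.IsSymm) (hB : LinearMap.IsOrthoᵢ B b) (hb : ∀ γ, B (b γ) (b γ) ≠ 0) (hμ : μ ≠ 0)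
    (hd : d ∈ B.skewAdjointSubmodule)
    (hnorm : ∀ d' ∈ skewHomogeneousEnd B (fun γ => k ∙ b γ) μ,
      d * d' - d' * d ∈ skewHomogeneousEnd B (fun γ => k ∙ b γ) μ) :
    d ∈ skewHomogeneousEnd B (fun γ => k ∙ b γ) μ := by
  refine ⟨hd, mem_homogeneousEnd_span_iff.mpr fun α =>
    b.mem_span_singleton_iff_repr_eq_zero.mpr fun β hβ => ?_⟩
  suffices b.repr (d (b α)) β * B (b β) (b β) = 0 from
    (mul_eq_zero.mp this).resolve_right (hb β)
  rcases eq_or_ne β α with rfl | hβα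
  · have hdiag := repr_mul_add_repr_mul_eq_zero hB hd β β
    have : (2 : k) * (b.repr (d (b β)) β * B (b β) (b β)) = 0 := by linear_combination hdiag
    exact (mul_eq_zero.mp this).resolve_left h2
  · -- test `d` against the commutator with `wedgeEnd B (b β) (b (β + μ))`, which kills `b α`
    have hα : α ≠ β + μ := fun h => hβ (by rw [h, add_assoc, hG, add_zero])
    have hμβ : β + μ ≠ β := fun h => hμ (by simpa using h)
    have hmem := mem_homogeneousEnd_span_iff.mp
      (hnorm _ (wedgeEnd_basis_mem_skewHomogeneousEnd hG hs hB β)).2 α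
    have hentry := b.mem_span_singleton_iff_repr_eq_zero.mp hmem (β + μ)
      fun h => hβα (add_right_cancel h)
    rw [LinearMap.sub_apply, Module.End.mul_apply, Module.End.mul_apply,
      wedgeEnd_basis_apply_of_ne hB hβα.symm hα, map_zero, zero_sub, wedgeEnd_apply] at hentry
    rw [map_neg, map_sub, map_smul, map_smul, Finsupp.neg_apply, Finsupp.sub_apply,
      Finsupp.smul_apply, Finsupp.smul_apply, b.repr_self, b.repr_self, Finsupp.single_eq_same,
      Finsupp.single_eq_of_ne hμβ, hB.apply_basis_left] at hentry
    simpa using hentry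

theorem eq_zero_of_repr_eq_zero_of_mem_skewHomogeneousEnd (hG : ∀ g : G, g + g = 0)
    (hB : LinearMap.IsOrthoᵢ B b) (hb : ∀ γ, B (b γ) (b γ) ≠ 0) (hR : ∀ γ, γ + μ ∈ R ↔ γ ∉ R)
    (hd : d ∈ skewHomogeneousEnd B (fun γ => k ∙ b γ) μ)
    (h0 : ∀ β ∈ R, b.repr (d (b β)) (β + μ) = 0) : d = 0 := by
  have hcoef : ∀ β, b.repr (d (b β)) (β + μ) = 0 := by
    intro β
    by_cases hβ : β ∈ R
    · exact h0 β hβ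
    · have h' := h0 _ ((hR β).mpr hβ)
      rw [add_assoc, hG, add_zero] at h'
      have hrel := repr_mul_add_repr_mul_eq_zero hB hd.1 β (β + μ)
      rw [h', zero_mul, add_zero] at hrel
      exact (mul_eq_zero.mp hrel).resolve_right (hb _)
  refine b.ext fun β => ?_
  rw [apply_basis_of_mem_homogeneousEnd hd.2, hcoef, zero_smul, LinearMap.zero_apply]

theorem two_mul_finrank_skewHomogeneousEnd (hG : ∀ g : G, g + g = 0) (hs : B.IsSymm)
    (hB : LinearMap.IsOrthoᵢ B b) (hb : ∀ γ, B (b γ) (b γ) ≠ 0) (hμ : μ ≠ 0) :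
    2 * Module.finrank k (skewHomogeneousEnd B (fun γ => k ∙ b γ) μ) = Fintype.card G := by
  classical
  obtain ⟨R, hR⟩ := exists_finset_add_mem_iff_notMem hG hμ
  -- an element of degree `μ` is determined by its entries at `(β + μ, β)`, `β ∈ R`
  let entries : skewHomogeneousEnd B (fun γ => k ∙ b γ) μ →ₗ[k] R → k :=
    LinearMap.pi fun β => b.coord (β + μ) ∘ₗ LinearMap.applyₗ (b β) ∘ₗ Submodule.subtype _
  have hinj : Function.Injective entries := by
    refine (injective_iff_map_eq_zero _).mpr fun d hd => Subtype.ext ?_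
    refine eq_zero_of_repr_eq_zero_of_mem_skewHomogeneousEnd hG hB hb hR d.2 fun β hβ => ?_
    exact congrFun hd ⟨β, hβ⟩
  have hsurj : Function.Surjective entries := fun a => by
    obtain ⟨d, hd, hda⟩ := exists_mem_skewHomogeneousEnd_repr_eq hG hs hB hb hμ hR a
    exact ⟨⟨d, hd⟩, funext hda⟩
  rw [(LinearEquiv.ofBijective entries ⟨hinj, hsurj⟩).finrank_eq,
    Module.finrank_fintype_fun_eq_card, Fintype.card_coe,
    two_mul_card_eq_of_add_mem_iff_notMem hR]

end HomogeneousBasis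

theorem cayley_z2cubed_grading_orthogonal_Lie_general
    {k : Type*} [Field k] {C : Type*} [AddCommGroup C] [Module k C]
    (hchar2 : ringChar k ≠ 2)
    (mul : C →ₗ[k] C →ₗ[k] C) (n : QuadraticForm k C)
    (hnondeg : ∀ x : C, (∀ y : C, polar n x y = 0) → x = 0)
    (hcomp : ∀ x y : C, n (mul x y) = n x * n y)
    (e : C) (hle : ∀ x : C, mul e x = x) (hre : ∀ x : C, mul x e = x)
    (A : ZMod 2 × ZMod 2 × ZMod 2 → Submodule k C)
    (hdecomp : DirectSum.IsInternal A)
    (hgrmul : ∀ g h : ZMod 2 × ZMod 2 × ZMod 2,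
      ∀ x ∈ A g, ∀ y ∈ A h, mul x y ∈ A (g + h))
    (hone : ∀ g : ZMod 2 × ZMod 2 × ZMod 2, Module.finrank k (A g) = 1) :
    ∀ (inO : Module.End k C → Prop)
      (inOmu : (ZMod 2 × ZMod 2 × ZMod 2) → Module.End k C → Prop),
      (∀ d : Module.End k C,
        inO d ↔ ∀ x y : C, polar n (d x) y + polar n x (d y) = 0) →
      (∀ (μ : ZMod 2 × ZMod 2 × ZMod 2) (d : Module.End k C),
        inOmu μ d ↔ (inO d ∧ ∀ γ : ZMod 2 × ZMod 2 × ZMod 2,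
          ∀ z ∈ A γ, d z ∈ A (γ + μ))) →
      ( -- o(C,n) = ⊕_μ o(C,n)_μ
        (∀ d : Module.End k C, inO d →
          ∃! f : (ZMod 2 × ZMod 2 × ZMod 2) → Module.End k C,
            (∀ μ, inOmu μ (f μ)) ∧ d = ∑ μ : ZMod 2 × ZMod 2 × ZMod 2, f μ) ∧
        -- it is a grading of the Lie algebra
        (∀ (μ ν : ZMod 2 × ZMod 2 × ZMod 2) (d d' : Module.End k C),
          inOmu μ d → inOmu ν d' → inOmu (μ + ν) (d * d' - d' * d)) ∧
        -- o(C,n)_0 = 0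
        (∀ d : Module.End k C, inOmu 0 d → d = 0) ∧
        -- each o(C,n)_μ, μ ≠ 0, is a 4-dimensional Cartan subalgebra
        (∀ μ : ZMod 2 × ZMod 2 × ZMod 2, μ ≠ 0 →
          (∃ V : Submodule k (Module.End k C),
            (V : Set (Module.End k C)) = {d | inOmu μ d} ∧
            Module.finrank k V = 4) ∧
          (∀ d d' : Module.End k C, inOmu μ d → inOmu μ d' →
            d * d' = d' * d) ∧
          (∀ d : Module.End k C, inO d →
            (∀ d' : Module.End k C, inOmu μ d' → inOmu μ (d * d' - d' * d)) →
            inOmu μ d)) ) := by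
  intro inO inOmu hO hOmu
  obtain ⟨b, rfl⟩ := hdecomp.exists_basis_eq_span hone
  have hG : ∀ g : ZMod 2 × ZMod 2 × ZMod 2, g + g = 0 := by decide
  have hgr : ∀ g h, mul (b g) (b h) ∈ k ∙ b (g + h) := fun g h =>
    hgrmul g h _ (Submodule.mem_span_singleton_self _) _ (Submodule.mem_span_singleton_self _)
  have hB := isOrthoᵢ_polarBilin_basis hG hnondeg hcomp hle hre hgr
  have hb := hB.not_isOrtho_basis_self_of_separatingLeft hnondeg
  have hs : LinearMap.BilinForm.IsSymm (polarBilin n) :=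
    LinearMap.BilinForm.isSymm_def.mpr (polar_comm n)
  have hO' : ∀ d, inO d ↔ d ∈ (polarBilin n).skewAdjointSubmodule := fun d =>
    (hO d).trans (mem_skewAdjointSubmodule_iff (B := polarBilin n)).symm
  have hOmu' : ∀ μ d, inOmu μ d ↔
      d ∈ skewHomogeneousEnd (polarBilin n) (fun γ => k ∙ b γ) μ := fun μ d =>
    (hOmu μ d).trans (and_congr (hO' d) mem_homogeneousEnd.symm)
  simp only [hO', hOmu']
  refine ⟨fun d => existsUnique_sum_mem_skewHomogeneousEnd hG hB,
    fun μ ν d d' => mul_sub_mul_mem_skewHomogeneousEnd,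
    fun d => eq_zero_of_mem_skewHomogeneousEnd_zero (Ring.two_ne_zero hchar2) hB hb,
    fun μ hμ => ⟨⟨skewHomogeneousEnd _ _ μ, rfl, ?_⟩,
      fun d d' => mul_comm_of_mem_skewHomogeneousEnd hG hB hb,
      fun d => mem_skewHomogeneousEnd_of_mul_sub_mul_mem (Ring.two_ne_zero hchar2) hG hs hB hb hμ⟩⟩
  have hcard := two_mul_finrank_skewHomogeneousEnd hG hs hB hb hμ
  rw [show Fintype.card (ZMod 2 × ZMod 2 × ZMod 2) = 8 from rfl] at hcard
  omega

/-- a ℤ₂³-grading with one-dimensional components of a Cayley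
algebra `(C,·,n)` (char k ≠ 2,3) induces a grading
`o(C,n) = ⊕_{μ} o(C,n)_μ` of the orthogonal Lie algebra, with
`o(C,n)_0 = 0` and each `o(C,n)_μ`, `μ ≠ 0`, a 4-dimensional Cartan
subalgebra (abelian and self-normalizing). -/
theorem cayley_z2cubed_grading_orthogonal_Lie
    {k : Type*} [Field k] {C : Type*} [AddCommGroup C] [Module k C]
    (hchar2 : ringChar k ≠ 2) (hchar3 : ringChar k ≠ 3)
    (mul : C →ₗ[k] C →ₗ[k] C) (n : QuadraticForm k C)
    (hnondeg : ∀ x : C, (∀ y : C, polar n x y = 0) → x = 0)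
    (hcomp : ∀ x y : C, n (mul x y) = n x * n y)
    (e : C) (hle : ∀ x : C, mul e x = x) (hre : ∀ x : C, mul x e = x)
    (hdim : Module.finrank k C = 8)
    (A : ZMod 2 × ZMod 2 × ZMod 2 → Submodule k C)
    (hdecomp : DirectSum.IsInternal A)
    (hgrmul : ∀ g h : ZMod 2 × ZMod 2 × ZMod 2,
      ∀ x ∈ A g, ∀ y ∈ A h, mul x y ∈ A (g + h))
    (hone : ∀ g : ZMod 2 × ZMod 2 × ZMod 2, Module.finrank k (A g) = 1) :
    ∀ (inO : Module.End k C → Prop)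
      (inOmu : (ZMod 2 × ZMod 2 × ZMod 2) → Module.End k C → Prop),
      (∀ d : Module.End k C,
        inO d ↔ ∀ x y : C, polar n (d x) y + polar n x (d y) = 0) →
      (∀ (μ : ZMod 2 × ZMod 2 × ZMod 2) (d : Module.End k C),
        inOmu μ d ↔ (inO d ∧ ∀ γ : ZMod 2 × ZMod 2 × ZMod 2,
          ∀ z ∈ A γ, d z ∈ A (γ + μ))) →
      ( -- o(C,n) = ⊕_μ o(C,n)_μ
        (∀ d : Module.End k C, inO d →
          ∃! f : (ZMod 2 × ZMod 2 × ZMod 2) → Module.End k C,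
            (∀ μ, inOmu μ (f μ)) ∧ d = ∑ μ : ZMod 2 × ZMod 2 × ZMod 2, f μ) ∧
        -- it is a grading of the Lie algebra
        (∀ (μ ν : ZMod 2 × ZMod 2 × ZMod 2) (d d' : Module.End k C),
          inOmu μ d → inOmu ν d' → inOmu (μ + ν) (d * d' - d' * d)) ∧
        -- o(C,n)_0 = 0
        (∀ d : Module.End k C, inOmu 0 d → d = 0) ∧
        -- each o(C,n)_μ, μ ≠ 0, is a 4-dimensional Cartan subalgebra
        (∀ μ : ZMod 2 × ZMod 2 × ZMod 2, μ ≠ 0 →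
          (∃ V : Submodule k (Module.End k C),
            (V : Set (Module.End k C)) = {d | inOmu μ d} ∧
            Module.finrank k V = 4) ∧
          (∀ d d' : Module.End k C, inOmu μ d → inOmu μ d' →
            d * d' = d' * d) ∧
          (∀ d : Module.End k C, inO d →
            (∀ d' : Module.End k C, inOmu μ d' → inOmu μ (d * d' - d' * d)) →
            inOmu μ d)) ) :=
  cayley_z2cubed_grading_orthogonal_Lie_general hchar2 mul n hnondeg hcomp e hle hre A hdecomp
    hgrmul hone
end

section
/- Let (S,*,n) be an Okubo algebra over a field k of characteristic ≠ 2, 3, and let x, y ∈ S satisfy n(x) = n(y) = 0, n(x, x*x) ≠ 0, n(y, y*y) ≠ 0, n(a, b) = 0 for all a ∈ {x, x*x}, b ∈ {y, y*y}, and x*y = 0 (so in particular n(x,y) = 0). Then for any nonzero scalars ε, δ, γ ∈ k, the k-linear endomorphism T of S defined by T(z) := ε(n(x,z)y − n(y,z)x) − δ (y*z)*x − γ x*(z*y) is a semisimple endomorphism (every T-invariant subspace of S has a T-invariant complement; equivalently, its minimal polynomial is squarefree and separable), and the kernel of T equals span{y*x, (y*x)*(y*x)}, the subalgebra of S generated by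 y*x. -/
open QuadraticMap

theorem okubo_aux_compL {k : Type*} [Field k] {S : Type*} [AddCommGroup S] [Module k S]
    (mul : S →ₗ[k] S →ₗ[k] S) (n : QuadraticForm k S)
    (hcomp : ∀ x y : S, n (mul x y) = n x * n y) (a b c : S) :
    polar n (mul a b) (mul a c) = n a * polar n b c := by
  have h : mul a b + mul a c = mul a (b + c) := ((mul a).map_add b c).symm
  simp only [QuadraticMap.polar, h, hcomp]; ring

theorem okubo_aux_compR {k : Type*} [Field k] {S : Type*} [AddCommGroup S] [Module k S]
    (mul : S →ₗ[k] S →ₗ[k] S) (n : QuadraticForm k S)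
    (hcomp : ∀ x y : S, n (mul x y) = n x * n y) (a b c : S) :
    polar n (mul a c) (mul b c) = n c * polar n a b := by
  have h : mul a c + mul b c = mul (a + b) c := by rw [map_add]; rfl
  simp only [QuadraticMap.polar, h, hcomp]; ring

theorem okubo_aux_cancel {k : Type*} [Field k] {S : Type*} [AddCommGroup S] [Module k S]
    (n : QuadraticForm k S)
    (hnondeg : ∀ x : S, (∀ y : S, polar n x y = 0) → x = 0)
    (p q : S) (h : ∀ w, polar n p w = polar n q w) : p = q :=
  sub_eq_zero.mp <| hnondeg (p - q) (fun w => by rw [polar_sub_left, h, sub_self])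

theorem okubo_aux_III {k : Type*} [Field k] {S : Type*} [AddCommGroup S] [Module k S]
    (mul : S →ₗ[k] S →ₗ[k] S) (n : QuadraticForm k S)
    (hnondeg : ∀ x : S, (∀ y : S, polar n x y = 0) → x = 0)
    (hcomp : ∀ x y : S, n (mul x y) = n x * n y)
    (hassoc : ∀ x y z : S, polar n (mul x y) z = polar n x (mul y z))
    (a b : S) : mul (mul a b) a = n a • b := by
  refine okubo_aux_cancel n hnondeg _ _ (fun w => ?_)
  rw [hassoc, okubo_aux_compL mul n hcomp, polar_smul_left, smul_eq_mul]

theorem okubo_aux_IV {k : Type*} [Field k] {S : Type*} [AddCommGroup S] [Module k S]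
    (mul : S →ₗ[k] S →ₗ[k] S) (n : QuadraticForm k S)
    (hnondeg : ∀ x : S, (∀ y : S, polar n x y = 0) → x = 0)
    (hcomp : ∀ x y : S, n (mul x y) = n x * n y)
    (hassoc : ∀ x y z : S, polar n (mul x y) z = polar n x (mul y z))
    (a b : S) : mul a (mul b a) = n a • b := by
  refine okubo_aux_cancel n hnondeg _ _ (fun w => ?_)
  rw [polar_comm, ← hassoc, okubo_aux_compR mul n hcomp, polar_smul_left, smul_eq_mul,
    polar_comm (n : S → k) b w]

theorem okubo_aux_L1 {k : Type*} [Field k] {S : Type*} [AddCommGroup S] [Module k S]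
    (mul : S →ₗ[k] S →ₗ[k] S) (n : QuadraticForm k S)
    (hnondeg : ∀ x : S, (∀ y : S, polar n x y = 0) → x = 0)
    (hcomp : ∀ x y : S, n (mul x y) = n x * n y)
    (hassoc : ∀ x y z : S, polar n (mul x y) z = polar n x (mul y z))
    (a b c : S) : mul (mul a b) c + mul (mul c b) a = polar n a c • b := by
  have hn : n (a + c) = n a + n c + polar n a c := by
    simp only [QuadraticMap.polar]; ring
  have key : mul (mul a b) c + mul (mul c b) a
      = mul (mul (a+c) b) (a+c) - mul (mul a b) a - mul (mul c b) c := by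
    simp only [map_add, LinearMap.add_apply]; abel
  rw [key, okubo_aux_III mul n hnondeg hcomp hassoc,
    okubo_aux_III mul n hnondeg hcomp hassoc a b,
    okubo_aux_III mul n hnondeg hcomp hassoc c b, hn, add_smul, add_smul]
  abel

theorem okubo_aux_L2 {k : Type*} [Field k] {S : Type*} [AddCommGroup S] [Module k S]
    (mul : S →ₗ[k] S →ₗ[k] S) (n : QuadraticForm k S)
    (hnondeg : ∀ x : S, (∀ y : S, polar n x y = 0) → x = 0)
    (hcomp : ∀ x y : S, n (mul x y) = n x * n y)
    (hassoc : ∀ x y z : S, polar n (mul x y) z = polar n x (mul y z))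
    (a b c : S) : mul a (mul b c) + mul c (mul b a) = polar n a c • b := by
  have hn : n (a + c) = n a + n c + polar n a c := by
    simp only [QuadraticMap.polar]; ring
  have key : mul a (mul b c) + mul c (mul b a)
      = mul (a+c) (mul b (a+c)) - mul a (mul b a) - mul c (mul b c) := by
    simp only [map_add, LinearMap.add_apply]; abel
  rw [key, okubo_aux_IV mul n hnondeg hcomp hassoc,
    okubo_aux_IV mul n hnondeg hcomp hassoc a b,
    okubo_aux_IV mul n hnondeg hcomp hassoc c b, hn, add_smul, add_smul]
  abel

set_option maxHeartbeats 1600000 in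
/-- for a standard pair `(x,y)` in an Okubo algebra
(char k ≠ 2,3) and nonzero scalars `ε, δ, γ`, the endomorphism
`T(z) = ε(n(x,z)y − n(y,z)x) − δ (y*z)*x − γ x*(z*y)` is semisimple (every
`T`-invariant subspace has a `T`-invariant complement) and its kernel is the
subalgebra generated by `y*x`, namely `span{y*x, (y*x)*(y*x)}`. -/
theorem okubo_toral_endomorphism_semisimple
    {k : Type*} [Field k] {S : Type*} [AddCommGroup S] [Module k S]
    (hchar2 : ringChar k ≠ 2) (hchar3 : ringChar k ≠ 3)
    (mul : S →ₗ[k] S →ₗ[k] S) (n : QuadraticForm k S)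
    (hnondeg : ∀ x : S, (∀ y : S, polar n x y = 0) → x = 0)
    (hcomp : ∀ x y : S, n (mul x y) = n x * n y)
    (hassoc : ∀ x y z : S, polar n (mul x y) z = polar n x (mul y z))
    (hdim : Module.finrank k S = 8)
    (hnopara : ¬ ∃ e : S, ∀ x : S,
      mul e x = polar n e x • e - x ∧ mul x e = polar n e x • e - x)
    (x y : S) (hxn : n x = 0) (hyn : n y = 0)
    (hxa : polar n x (mul x x) ≠ 0) (hya : polar n y (mul y y) ≠ 0)
    (horth : ∀ a ∈ ({x, mul x x} : Set S), ∀ b ∈ ({y, mul y y} : Set S),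
      polar n a b = 0)
    (hxy : mul x y = 0)
    (ε δ γ : k) (hε : ε ≠ 0) (hδ : δ ≠ 0) (hγ : γ ≠ 0)
    (T : Module.End k S)
    (hT : ∀ z : S, T z =
      ε • (polar n x z • y - polar n y z • x) -
        δ • mul (mul y z) x - γ • mul x (mul z y)) :
    (∀ W : Submodule k S, (∀ z ∈ W, T z ∈ W) →
      ∃ W' : Submodule k S, (∀ z ∈ W', T z ∈ W') ∧ W ⊓ W' = ⊥ ∧ W ⊔ W' = ⊤) ∧
    LinearMap.ker T = Submodule.span k {mul y x, mul (mul y x) (mul y x)} := by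
  have III := okubo_aux_III mul n hnondeg hcomp hassoc
  have IV := okubo_aux_IV mul n hnondeg hcomp hassoc
  have L1 := okubo_aux_L1 mul n hnondeg hcomp hassoc
  have L2 := okubo_aux_L2 mul n hnondeg hcomp hassoc
  -- orthogonality facts
  have pxy : polar n x y = 0 := horth x (Set.mem_insert _ _) y (Set.mem_insert _ _)
  have pxyy : polar n x (mul y y) = 0 :=
    horth x (Set.mem_insert _ _) (mul y y) (Set.mem_insert_of_mem _ rfl)
  have pxxy : polar n (mul x x) y = 0 :=
    horth (mul x x) (Set.mem_insert_of_mem _ rfl) y (Set.mem_insert _ _)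
  have pxxyy : polar n (mul x x) (mul y y) = 0 :=
    horth (mul x x) (Set.mem_insert_of_mem _ rfl) (mul y y) (Set.mem_insert_of_mem _ rfl)
  -- norm values
  have nE : n (mul y x) = 0 := by rw [hcomp, hyn, zero_mul]
  have nXX : n (mul x x) = 0 := by rw [hcomp, hxn, zero_mul]
  have nYY : n (mul y y) = 0 := by rw [hcomp, hyn, zero_mul]
  have nU : n (mul (mul y x) x) = 0 := by rw [hcomp, nE, zero_mul]
  have nV : n (mul y (mul y x)) = 0 := by rw [hcomp, hyn, zero_mul]
  have nEE : n (mul (mul y x) (mul y x)) = 0 := by rw [hcomp, nE, zero_mul]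
  -- product facts
  have m1 : mul x (mul x x) = 0 := by rw [IV x x, hxn, zero_smul]
  have m2 : mul (mul x x) x = 0 := by rw [III x x, hxn, zero_smul]
  have m3 : mul y (mul y y) = 0 := by rw [IV y y, hyn, zero_smul]
  have m4 : mul (mul y y) y = 0 := by rw [III y y, hyn, zero_smul]
  have m5 : mul x (mul y x) = 0 := by rw [IV x y, hxn, zero_smul]
  have m6 : mul (mul y x) y = 0 := by rw [III y x, hyn, zero_smul]
  have m7 : mul (mul y y) x = 0 := by
    have h := L1 x y y
    rwa [hxy, LinearMap.map_zero₂, pxy, zero_smul, zero_add] at h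
  have m8 : mul y (mul x x) = 0 := by
    have h := L2 x x y
    rwa [hxy, map_zero, zero_add, pxy, zero_smul] at h
  have m9 : mul x (mul y y) = - mul y (mul y x) := by
    have h := L2 x y y
    rw [pxy, zero_smul] at h
    exact eq_neg_of_add_eq_zero_left h
  have m10 : mul (mul x x) y = - mul (mul y x) x := by
    have h := L1 y x x
    rw [polar_comm (⇑n) y x, pxy, zero_smul] at h
    exact eq_neg_of_add_eq_zero_right h
  have pxe : polar n x (mul y x) = 0 := by
    have h := hassoc x y x
    rw [hxy, polar_zero_left] at h
    exact h.symm
  have pye : polar n y (mul y x) = 0 := by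
    have h := hassoc y y x
    rw [polar_comm (⇑n) (mul y y) x, pxyy] at h
    exact h.symm
  have m11 : mul x (mul (mul y x) x) = 0 := by rw [IV x (mul y x), hxn, zero_smul]
  have m12 : mul y (mul (mul y x) x) = 0 := by
    have h := L2 y (mul y x) x
    rwa [m6, map_zero, add_zero, polar_comm (⇑n) y x, pxy, zero_smul] at h
  have m13 : mul (mul (mul y x) x) x = -(polar n x (mul x x) • y) := by
    have h := L1 (mul x x) y x
    rw [hxy, LinearMap.map_zero₂, add_zero, m10, LinearMap.map_neg₂,
      polar_comm (⇑n) (mul x x) x] at h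
    rw [← h, neg_neg]
  have m14 : mul (mul x x) (mul y x) = polar n x (mul x x) • y := by
    have h := L1 (mul y x) x x
    rw [m13, polar_comm (⇑n) (mul y x) x, pxe, zero_smul, neg_add_eq_zero] at h
    exact h.symm
  have m15 : mul (mul y x) (mul y y) = polar n y (mul y y) • x := by
    have h := L1 y x (mul y y)
    rwa [m7, LinearMap.map_zero₂, add_zero] at h
  have m16 : mul y (mul y (mul y x)) = -(polar n y (mul y y) • x) := by
    have h := L2 y y (mul y x)
    rw [m15, pye, zero_smul] at h
    exact eq_neg_of_add_eq_zero_left h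
  have m17 : mul (mul y x) (mul x x) = 0 := by
    have h := L1 y x (mul x x)
    rwa [m2, LinearMap.map_zero₂, add_zero, polar_comm (⇑n) y (mul x x), pxxy,
      zero_smul] at h
  have m18 : mul (mul y y) (mul y x) = 0 := by
    have h := L2 x y (mul y y)
    rwa [m3, map_zero, zero_add, pxyy, zero_smul] at h
  have m19 : mul (mul (mul y x) x) y = mul (mul y y) (mul x x) := by
    have h := L1 (mul x x) y y
    rw [pxxy, zero_smul, m10, LinearMap.map_neg₂, neg_add_eq_zero] at h
    exact h
  have m20 : mul (mul y x) (mul y x) = - mul (mul y y) (mul x x) := by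
    have h := L1 y x (mul y x)
    rw [m19, pye, zero_smul] at h
    exact eq_neg_of_add_eq_zero_left h
  have hYX : mul (mul y y) (mul x x) = - mul (mul y x) (mul y x) := by
    rw [m20, neg_neg]
  have m21 : mul x (mul (mul y x) (mul y x)) = -(polar n x (mul x x) • mul y y) := by
    have h := L2 x (mul y y) (mul x x)
    rw [m7, map_zero, add_zero, hYX, _root_.map_neg] at h
    exact neg_eq_iff_eq_neg.mp h
  have m22 : mul y (mul (mul y x) (mul y x)) = 0 := by
    have h := L2 y (mul y y) (mul x x)
    rw [m4, map_zero, add_zero, polar_comm (⇑n) y (mul x x), pxxy, zero_smul, hYX,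
      _root_.map_neg, neg_eq_zero] at h
    exact h
  have m23 : mul (mul (mul y x) (mul y x)) y = -(polar n y (mul y y) • mul x x) := by
    have h := L1 (mul y y) (mul x x) y
    rw [m8, LinearMap.map_zero₂, add_zero, polar_comm (⇑n) (mul y y) y, hYX,
      LinearMap.map_neg₂] at h
    exact neg_eq_iff_eq_neg.mp h
  have m24 : mul (mul y (mul y x)) x = 0 := by
    have h := III x (mul y y)
    rwa [m9, LinearMap.map_neg₂, hxn, zero_smul, neg_eq_zero] at h
  have m25 : mul (mul y (mul y x)) y = 0 := by rw [III y (mul y x), hyn, zero_smul]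
  have m26 : mul x (mul y (mul y x)) = - mul (mul y x) (mul y x) := by
    have h := L2 x y (mul y x)
    rw [pxe, zero_smul] at h
    exact eq_neg_of_add_eq_zero_left h
  have m27 : mul (mul y x) (mul (mul y x) x) = polar n x (mul x x) • mul y y := by
    have h := L2 (mul y x) (mul y x) x
    rw [m21, polar_comm (⇑n) (mul y x) x, pxe, zero_smul, add_neg_eq_zero] at h
    exact h
  have m28 : mul (mul y x) (mul y (mul y x)) = 0 := by
    rw [IV (mul y x) y, nE, zero_smul]
  -- Gram matrix facts; basis order: x, U=(yx)x, YY, y, V=y(yx), XX, E=yx, EE=(yx)(yx)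
  have P00 : polar n x x = 0 := by rw [polar_self, hxn, smul_zero]
  have P01 : polar n x (mul (mul y x) x) = 0 := by
    have h := hassoc x (mul y x) x
    rw [m5, polar_zero_left] at h; exact h.symm
  have P04 : polar n x (mul y (mul y x)) = 0 := by
    have h := hassoc x y (mul y x)
    rw [hxy, polar_zero_left] at h; exact h.symm
  have P07 : polar n x (mul (mul y x) (mul y x)) = 0 := by
    have h := hassoc x (mul y x) (mul y x)
    rw [m5, polar_zero_left] at h; exact h.symm
  have P11 : polar n (mul (mul y x) x) (mul (mul y x) x) = 0 := by
    rw [polar_self, nU, smul_zero]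
  have P46 : polar n (mul y (mul y x)) (mul y x) = 0 := by
    have h := hassoc x (mul y y) (mul y x)
    rw [m18, polar_zero_right, m9, polar_neg_left, neg_eq_zero] at h; exact h
  have P37 : polar n y (mul (mul y x) (mul y x)) = 0 := by
    have h := hassoc y (mul y x) (mul y x)
    rw [P46] at h; exact h.symm
  have P66 : polar n (mul y x) (mul y x) = 0 := by rw [polar_self, nE, smul_zero]
  have P67 : polar n (mul y x) (mul (mul y x) (mul y x)) =
      -(polar n y (mul y y) * polar n x (mul x x)) := by
    have h := hassoc (mul y x) (mul y y) (mul x x)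
    rw [m15, polar_smul_left, smul_eq_mul, hYX, polar_neg_right] at h
    exact neg_eq_iff_eq_neg.mp h.symm
  have P14 : polar n (mul (mul y x) x) (mul y (mul y x)) =
      polar n y (mul y y) * polar n x (mul x x) := by
    have h := hassoc (mul y x) x (mul y (mul y x))
    rw [m26, polar_neg_right, P67] at h
    rw [h, neg_neg]
  have P12 : polar n (mul (mul y x) x) (mul y y) = 0 := by
    have h := hassoc (mul y x) x (mul y y)
    rw [m9, polar_neg_right] at h
    rw [h, polar_comm (⇑n) (mul y x) (mul y (mul y x)), P46, neg_zero]
  have P13 : polar n (mul (mul y x) x) y = 0 := by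
    have h := hassoc (mul y x) x y
    rwa [hxy, polar_zero_right] at h
  have P15 : polar n (mul (mul y x) x) (mul x x) = 0 := by
    have h := hassoc (mul y x) x (mul x x)
    rwa [m1, polar_zero_right] at h
  have P16 : polar n (mul (mul y x) x) (mul y x) = 0 := by
    have h := hassoc (mul y x) x (mul y x)
    rwa [m5, polar_zero_right] at h
  have P26 : polar n (mul y y) (mul y x) = 0 := by
    have h := hassoc (mul y y) y x
    rw [m4, polar_zero_left] at h; exact h.symm
  have P17 : polar n (mul (mul y x) x) (mul (mul y x) (mul y x)) = 0 := by
    have h := hassoc (mul y x) x (mul (mul y x) (mul y x))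
    rw [m21, polar_neg_right, polar_smul_right, smul_eq_mul] at h
    rw [h, polar_comm (⇑n) (mul y x) (mul y y), P26, mul_zero, neg_zero]
  have P34 : polar n y (mul y (mul y x)) = 0 := by
    have h := hassoc y y (mul y x)
    rw [P26] at h; exact h.symm
  have P22 : polar n (mul y y) (mul y y) = 0 := by rw [polar_self, nYY, smul_zero]
  have P23 : polar n (mul y y) y = polar n y (mul y y) := polar_comm (⇑n) _ _
  have P42 : polar n (mul y (mul y x)) (mul y y) = 0 := by
    have h := hassoc y (mul y x) (mul y y)
    rwa [m15, polar_smul_right, smul_eq_mul, polar_comm (⇑n) y x, pxy, mul_zero] at h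
  have P25 : polar n (mul y y) (mul x x) = 0 := by
    rw [polar_comm]; exact pxxyy
  have P72 : polar n (mul (mul y x) (mul y x)) (mul y y) = 0 := by
    have h := hassoc (mul y x) (mul y x) (mul y y)
    rwa [m15, polar_smul_right, polar_comm (⇑n) (mul y x) x, pxe, smul_zero] at h
  have P33 : polar n y y = 0 := by rw [polar_self, hyn, smul_zero]
  have P35 : polar n y (mul x x) = 0 := by rw [polar_comm]; exact pxxy
  have P44 : polar n (mul y (mul y x)) (mul y (mul y x)) = 0 := by
    rw [polar_self, nV, smul_zero]
  have P45 : polar n (mul y (mul y x)) (mul x x) = 0 := by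
    have h := hassoc y (mul y x) (mul x x)
    rwa [m17, polar_zero_right] at h
  have P74 : polar n (mul (mul y x) (mul y x)) (mul y (mul y x)) = 0 := by
    have h := hassoc (mul y x) (mul y x) (mul y (mul y x))
    rwa [m28, polar_zero_right] at h
  have P55 : polar n (mul x x) (mul x x) = 0 := by rw [polar_self, nXX, smul_zero]
  have P65 : polar n (mul y x) (mul x x) = 0 := by
    have h := hassoc y x (mul x x)
    rwa [m1, polar_zero_right] at h
  have P57 : polar n (mul x x) (mul (mul y x) (mul y x)) = 0 := by
    have h := hassoc (mul x x) (mul y x) (mul y x)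
    rw [m14, polar_smul_left, pye, smul_zero] at h
    exact h.symm
  have P77 : polar n (mul (mul y x) (mul y x)) (mul (mul y x) (mul y x)) = 0 := by
    rw [polar_self, nEE, smul_zero]
  -- action of T on the basis
  have hT0 : T x = (-δ) • mul (mul y x) x := by
    rw [hT x, hxy, map_zero, polar_self, hxn, smul_zero, polar_comm (⇑n) y x, pxy]
    module
  have hT1 : T (mul (mul y x) x) =
      (-(γ * polar n x (mul x x))) • mul y y := by
    rw [hT, P01, polar_comm (⇑n) y (mul (mul y x) x), P13, m12, LinearMap.map_zero₂,
      m19, hYX, _root_.map_neg, m21]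
    module
  have hT2 : T (mul y y) = (-(ε * polar n y (mul y y))) • x := by
    rw [hT, pxyy, m3, LinearMap.map_zero₂, m4, map_zero]
    module
  have hT3 : T y = γ • mul y (mul y x) := by
    rw [hT, pxy, polar_self, hyn, smul_zero, m7, m9]
    module
  have hT4 : T (mul y (mul y x)) = (δ * polar n y (mul y y)) • mul x x := by
    rw [hT, P04, P34, m16, LinearMap.map_neg₂,
      LinearMap.map_smul₂, m25, map_zero]
    module
  have hT5 : T (mul x x) = (ε * polar n x (mul x x)) • y := by
    rw [hT, polar_comm (⇑n) y (mul x x), pxxy, m8, LinearMap.map_zero₂, m10,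
      _root_.map_neg, m11]
    module
  have hT6 : T (mul y x) = 0 := by
    rw [hT, pxe, pye, m24, m6, map_zero]
    module
  have hT7 : T (mul (mul y x) (mul y x)) = 0 := by
    rw [hT, P07, P37, m22,
      LinearMap.map_zero₂, m23, _root_.map_neg, _root_.map_smul, m1]
    module
  -- linear independence of the eight vectors
  have hli : LinearIndependent k
      ![x, mul (mul y x) x, mul y y, y, mul y (mul y x), mul x x, mul y x,
        mul (mul y x) (mul y x)] := by
    rw [Fintype.linearIndependent_iff]
    intro g hg
    rw [Fin.sum_univ_eight] at hg
    have hb0 : (![x, mul (mul y x) x, mul y y, y, mul y (mul y x), mul x x, mul y x,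
        mul (mul y x) (mul y x)] : Fin 8 → S) 0 = x := rfl
    have hb1 : (![x, mul (mul y x) x, mul y y, y, mul y (mul y x), mul x x, mul y x,
        mul (mul y x) (mul y x)] : Fin 8 → S) 1 = mul (mul y x) x := rfl
    have hb2 : (![x, mul (mul y x) x, mul y y, y, mul y (mul y x), mul x x, mul y x,
        mul (mul y x) (mul y x)] : Fin 8 → S) 2 = mul y y := rfl
    have hb3 : (![x, mul (mul y x) x, mul y y, y, mul y (mul y x), mul x x, mul y x,
        mul (mul y x) (mul y x)] : Fin 8 → S) 3 = y := rfl
    have hb4 : (![x, mul (mul y x) x, mul y y, y, mul y (mul y x), mul x x, mul y x,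
        mul (mul y x) (mul y x)] : Fin 8 → S) 4 = mul y (mul y x) := rfl
    have hb5 : (![x, mul (mul y x) x, mul y y, y, mul y (mul y x), mul x x, mul y x,
        mul (mul y x) (mul y x)] : Fin 8 → S) 5 = mul x x := rfl
    have hb6 : (![x, mul (mul y x) x, mul y y, y, mul y (mul y x), mul x x, mul y x,
        mul (mul y x) (mul y x)] : Fin 8 → S) 6 = mul y x := rfl
    have hb7 : (![x, mul (mul y x) x, mul y y, y, mul y (mul y x), mul x x, mul y x,
        mul (mul y x) (mul y x)] : Fin 8 → S) 7 = mul (mul y x) (mul y x) := rfl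
    rw [hb0, hb1, hb2, hb3, hb4, hb5, hb6, hb7] at hg
    have key : ∀ w, g 0 * polar n x w + g 1 * polar n (mul (mul y x) x) w
        + g 2 * polar n (mul y y) w + g 3 * polar n y w
        + g 4 * polar n (mul y (mul y x)) w + g 5 * polar n (mul x x) w
        + g 6 * polar n (mul y x) w + g 7 * polar n (mul (mul y x) (mul y x)) w
        = 0 := by
      intro w
      have h := congrArg (fun s => polar n s w) hg
      simpa only [polar_add_left, polar_smul_left, smul_eq_mul, polar_zero_left] using h
    have hg5 : g 5 = 0 := by
      have h := key x
      rw [P00, polar_comm (⇑n) (mul (mul y x) x) x, P01,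
        polar_comm (⇑n) (mul y y) x, pxyy, polar_comm (⇑n) y x, pxy,
        polar_comm (⇑n) (mul y (mul y x)) x, P04, polar_comm (⇑n) (mul x x) x,
        polar_comm (⇑n) (mul y x) x, pxe,
        polar_comm (⇑n) (mul (mul y x) (mul y x)) x, P07] at h
      simp only [mul_zero, zero_add, add_zero] at h
      exact (mul_eq_zero.mp h).resolve_right hxa
    have hg4 : g 4 = 0 := by
      have h := key (mul (mul y x) x)
      rw [P01, P11, polar_comm (⇑n) (mul y y) (mul (mul y x) x), P12,
        polar_comm (⇑n) y (mul (mul y x) x), P13,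
        polar_comm (⇑n) (mul y (mul y x)) (mul (mul y x) x), P14,
        polar_comm (⇑n) (mul x x) (mul (mul y x) x), P15,
        polar_comm (⇑n) (mul y x) (mul (mul y x) x), P16,
        polar_comm (⇑n) (mul (mul y x) (mul y x)) (mul (mul y x) x), P17] at h
      simp only [mul_zero, zero_add, add_zero] at h
      rcases mul_eq_zero.mp h with h' | h'
      · exact h'
      · exact absurd h' (mul_ne_zero hya hxa)
    have hg3 : g 3 = 0 := by
      have h := key (mul y y)
      rw [pxyy, P12, P22, P42, pxxyy, polar_comm (⇑n) (mul y x) (mul y y), P26, P72] at h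
      simp only [mul_zero, zero_add, add_zero] at h
      exact (mul_eq_zero.mp h).resolve_right hya
    have hg2 : g 2 = 0 := by
      have h := key y
      rw [pxy, P13, P23, P33, polar_comm (⇑n) (mul y (mul y x)) y, P34,
        pxxy, polar_comm (⇑n) (mul y x) y, pye,
        polar_comm (⇑n) (mul (mul y x) (mul y x)) y, P37] at h
      simp only [mul_zero, zero_add, add_zero] at h
      exact (mul_eq_zero.mp h).resolve_right hya
    have hg1 : g 1 = 0 := by
      have h := key (mul y (mul y x))
      rw [P04, P14, polar_comm (⇑n) (mul y y) (mul y (mul y x)), P42, P34, P44,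
        polar_comm (⇑n) (mul x x) (mul y (mul y x)), P45,
        polar_comm (⇑n) (mul y x) (mul y (mul y x)), P46, P74] at h
      simp only [mul_zero, zero_add, add_zero] at h
      rcases mul_eq_zero.mp h with h' | h'
      · exact h'
      · exact absurd h' (mul_ne_zero hya hxa)
    have hg0 : g 0 = 0 := by
      have h := key (mul x x)
      rw [P15, P25, P35, P45, P55, P65,
        polar_comm (⇑n) (mul (mul y x) (mul y x)) (mul x x), P57] at h
      simp only [mul_zero, zero_add, add_zero] at h
      exact (mul_eq_zero.mp h).resolve_right hxa
    have hg6 : g 6 = 0 := by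
      have h := key (mul (mul y x) (mul y x))
      rw [P07, P17, polar_comm (⇑n) (mul y y) (mul (mul y x) (mul y x)), P72,
        P37, polar_comm (⇑n) (mul y (mul y x)) (mul (mul y x) (mul y x)), P74,
        P57, P67, P77] at h
      simp only [mul_zero, zero_add, add_zero] at h
      rcases mul_eq_zero.mp h with h' | h'
      · exact h'
      · rw [neg_eq_zero] at h'
        exact absurd h' (mul_ne_zero hya hxa)
    have hg7 : g 7 = 0 := by
      have h := key (mul y x)
      rw [pxe, P16, P26, pye, P46, polar_comm (⇑n) (mul x x) (mul y x), P65, P66,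
        polar_comm (⇑n) (mul (mul y x) (mul y x)) (mul y x), P67] at h
      simp only [mul_zero, zero_add, add_zero] at h
      rcases mul_eq_zero.mp h with h' | h'
      · exact h'
      · rw [neg_eq_zero] at h'
        exact absurd h' (mul_ne_zero hya hxa)
    intro i
    fin_cases i <;> assumption
  -- basis
  have hcard : Fintype.card (Fin 8) = Module.finrank k S := by simp [hdim]
  set B := basisOfLinearIndependentOfCardEqFinrank hli hcard with hBdef
  have hB : ⇑B = ![x, mul (mul y x) x, mul y y, y, mul y (mul y x), mul x x, mul y x,
      mul (mul y x) (mul y x)] := coe_basisOfLinearIndependentOfCardEqFinrank _ _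
  have hspan : Submodule.span k
      ({x, mul (mul y x) x, mul y y, y, mul y (mul y x), mul x x, mul y x,
        mul (mul y x) (mul y x)} : Set S) = ⊤ := by
    have h := B.span_eq
    rw [hB] at h
    rw [← h]
    congr 1
    simp only [Matrix.range_cons, Matrix.range_empty, Set.singleton_union,
      Set.union_empty]
  -- the annihilating polynomial
  have haeval : Polynomial.aeval T (Polynomial.X ^ 7 -
      Polynomial.C ((ε * δ * γ * polar n x (mul x x) * polar n y (mul y y)) ^ 2) *
        Polynomial.X) = 0 := by
    apply LinearMap.ext_on hspan
    intro w hw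
    simp only [Set.mem_insert_iff, Set.mem_singleton_iff] at hw
    have hred : ∀ u : S, (Polynomial.aeval T (Polynomial.X ^ 7 -
        Polynomial.C ((ε * δ * γ * polar n x (mul x x) * polar n y (mul y y)) ^ 2) *
          Polynomial.X)) u
        = T (T (T (T (T (T (T u)))))) -
          ((ε * δ * γ * polar n x (mul x x) * polar n y (mul y y)) ^ 2) • T u := by
      intro u
      simp only [_root_.map_sub, _root_.map_mul, Polynomial.aeval_X_pow, Polynomial.aeval_C,
        Polynomial.aeval_X, LinearMap.sub_apply, Module.End.mul_apply,
        Module.algebraMap_end_apply, pow_succ, pow_zero, Module.End.one_apply, one_mul]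
      module
    rcases hw with rfl | rfl | rfl | rfl | rfl | rfl | rfl | rfl <;>
      rw [hred, LinearMap.zero_apply] <;>
      simp only [hT0, hT1, hT2, hT3, hT4, hT5, hT6, hT7, _root_.map_smul, smul_smul, map_zero,
        smul_zero] <;>
      module
  -- nonzero scalars
  have h2k : (2:k) ≠ 0 := fun h =>
    hchar2 (CharP.ringChar_of_prime_eq_zero Nat.prime_two (by exact_mod_cast h))
  have h3k : (3:k) ≠ 0 := fun h =>
    hchar3 (CharP.ringChar_of_prime_eq_zero Nat.prime_three (by exact_mod_cast h))
  have h6k : (6:k) ≠ 0 := by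
    have h23 : (2:k) * (3:k) = 6 := by norm_num
    rw [← h23]; exact mul_ne_zero h2k h3k
  have hcne : ε * δ * γ * polar n x (mul x x) * polar n y (mul y y) ≠ 0 :=
    mul_ne_zero (mul_ne_zero (mul_ne_zero (mul_ne_zero hε hδ) hγ) hxa) hya
  have h6c4 : (6:k) * (ε * δ * γ * polar n x (mul x x) * polar n y (mul y y)) ^ 4 ≠ 0 :=
    mul_ne_zero h6k (pow_ne_zero _ hcne)
  -- separability of the annihilating polynomial
  have hsep : (Polynomial.X ^ 7 -
      Polynomial.C ((ε * δ * γ * polar n x (mul x x) * polar n y (mul y y)) ^ 2) *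
        Polynomial.X : Polynomial k).Separable := by
    set c : k := ε * δ * γ * polar n x (mul x x) * polar n y (mul y y) with hcdef
    have hder : Polynomial.derivative (Polynomial.X ^ 7 -
        Polynomial.C (c ^ 2) * Polynomial.X : Polynomial k) =
        Polynomial.C 7 * Polynomial.X ^ 6 - Polynomial.C (c ^ 2) := by
      simp only [Polynomial.derivative_sub, Polynomial.derivative_X_pow,
        Polynomial.derivative_C_mul, Polynomial.derivative_X, mul_one]
      norm_num
    rw [Polynomial.separable_def, hder]
    refine ⟨Polynomial.C (((6:k) * c ^ 4)⁻¹) * (Polynomial.C (-49 : k) * Polynomial.X ^ 5),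
      Polynomial.C (((6:k) * c ^ 4)⁻¹) *
        (Polynomial.C (7:k) * Polynomial.X ^ 6 - Polynomial.C ((6:k) * c ^ 2)), ?_⟩
    have e2 : (Polynomial.C (c ^ 2) : Polynomial k) = Polynomial.C c ^ 2 := by rw [map_pow]
    have e6c2 : (Polynomial.C ((6:k) * c ^ 2) : Polynomial k) = 6 * Polynomial.C c ^ 2 := by
      rw [map_mul, map_pow, map_ofNat]
    have e6c4 : (Polynomial.C ((6:k) * c ^ 4) : Polynomial k) = 6 * Polynomial.C c ^ 4 := by
      rw [map_mul, map_pow, map_ofNat]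
    have e49 : (Polynomial.C (-49 : k) : Polynomial k) = -49 := by
      rw [_root_.map_neg, map_ofNat]
    have e7 : (Polynomial.C (7 : k) : Polynomial k) = 7 := map_ofNat _ 7
    have key : (Polynomial.C (-49:k) * Polynomial.X ^ 5) *
        (Polynomial.X ^ 7 - Polynomial.C (c ^ 2) * Polynomial.X) +
        (Polynomial.C (7:k) * Polynomial.X ^ 6 - Polynomial.C ((6:k) * c ^ 2)) *
        (Polynomial.C (7:k) * Polynomial.X ^ 6 - Polynomial.C (c ^ 2)) =
        Polynomial.C ((6:k) * c ^ 4) := by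
      rw [e2, e6c2, e6c4, e49, e7]; ring
    calc Polynomial.C (((6:k) * c ^ 4)⁻¹) * (Polynomial.C (-49 : k) * Polynomial.X ^ 5) *
          (Polynomial.X ^ 7 - Polynomial.C (c ^ 2) * Polynomial.X) +
        Polynomial.C (((6:k) * c ^ 4)⁻¹) *
          (Polynomial.C (7:k) * Polynomial.X ^ 6 - Polynomial.C ((6:k) * c ^ 2)) *
          (Polynomial.C (7:k) * Polynomial.X ^ 6 - Polynomial.C (c ^ 2))
        = Polynomial.C (((6:k) * c ^ 4)⁻¹) *
          ((Polynomial.C (-49:k) * Polynomial.X ^ 5) *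
            (Polynomial.X ^ 7 - Polynomial.C (c ^ 2) * Polynomial.X) +
          (Polynomial.C (7:k) * Polynomial.X ^ 6 - Polynomial.C ((6:k) * c ^ 2)) *
            (Polynomial.C (7:k) * Polynomial.X ^ 6 - Polynomial.C (c ^ 2))) := by ring
      _ = Polynomial.C (((6:k) * c ^ 4)⁻¹) * Polynomial.C ((6:k) * c ^ 4) := by rw [key]
      _ = 1 := by rw [← map_mul, inv_mul_cancel₀ h6c4, map_one]
  have hss : T.IsSemisimple :=
    Module.End.isSemisimple_of_squarefree_aeval_eq_zero hsep.squarefree haeval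
  constructor
  · intro W hW
    obtain ⟨q, hq, hcompl⟩ := Module.End.isSemisimple_iff.mp hss W
      (fun z hz => Submodule.mem_comap.mpr (hW z hz))
    exact ⟨q, fun z hz => Submodule.mem_comap.mp (hq hz),
      disjoint_iff.mp hcompl.disjoint, codisjoint_iff.mp hcompl.codisjoint⟩
  · -- kernel = span {yx, (yx)(yx)}
    apply le_antisymm
    · intro z hz
      rw [LinearMap.mem_ker] at hz
      have hrep := B.sum_repr z
      rw [Fin.sum_univ_eight, hB] at hrep
      have hb0 : (![x, mul (mul y x) x, mul y y, y, mul y (mul y x), mul x x, mul y x,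
          mul (mul y x) (mul y x)] : Fin 8 → S) 0 = x := rfl
      have hb1 : (![x, mul (mul y x) x, mul y y, y, mul y (mul y x), mul x x, mul y x,
          mul (mul y x) (mul y x)] : Fin 8 → S) 1 = mul (mul y x) x := rfl
      have hb2 : (![x, mul (mul y x) x, mul y y, y, mul y (mul y x), mul x x, mul y x,
          mul (mul y x) (mul y x)] : Fin 8 → S) 2 = mul y y := rfl
      have hb3 : (![x, mul (mul y x) x, mul y y, y, mul y (mul y x), mul x x, mul y x,
          mul (mul y x) (mul y x)] : Fin 8 → S) 3 = y := rfl
      have hb4 : (![x, mul (mul y x) x, mul y y, y, mul y (mul y x), mul x x, mul y x,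
          mul (mul y x) (mul y x)] : Fin 8 → S) 4 = mul y (mul y x) := rfl
      have hb5 : (![x, mul (mul y x) x, mul y y, y, mul y (mul y x), mul x x, mul y x,
          mul (mul y x) (mul y x)] : Fin 8 → S) 5 = mul x x := rfl
      have hb6 : (![x, mul (mul y x) x, mul y y, y, mul y (mul y x), mul x x, mul y x,
          mul (mul y x) (mul y x)] : Fin 8 → S) 6 = mul y x := rfl
      have hb7 : (![x, mul (mul y x) x, mul y y, y, mul y (mul y x), mul x x, mul y x,
          mul (mul y x) (mul y x)] : Fin 8 → S) 7 = mul (mul y x) (mul y x) := rfl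
      rw [hb0, hb1, hb2, hb3, hb4, hb5, hb6, hb7] at hrep
      have hTz : T z =
          (-(B.repr z 2 * (ε * polar n y (mul y y)))) • x +
          (-(B.repr z 0 * δ)) • mul (mul y x) x +
          (-(B.repr z 1 * (γ * polar n x (mul x x)))) • mul y y +
          (B.repr z 5 * (ε * polar n x (mul x x))) • y +
          (B.repr z 3 * γ) • mul y (mul y x) +
          (B.repr z 4 * (δ * polar n y (mul y y))) • mul x x := by
        conv_lhs => rw [← hrep]
        simp only [map_add, _root_.map_smul, hT0, hT1, hT2, hT3, hT4, hT5, hT6, hT7,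
          smul_smul, smul_zero, add_zero]
        module
      have h0 : (-(B.repr z 2 * (ε * polar n y (mul y y)))) • x +
          (-(B.repr z 0 * δ)) • mul (mul y x) x +
          (-(B.repr z 1 * (γ * polar n x (mul x x)))) • mul y y +
          (B.repr z 5 * (ε * polar n x (mul x x))) • y +
          (B.repr z 3 * γ) • mul y (mul y x) +
          (B.repr z 4 * (δ * polar n y (mul y y))) • mul x x = 0 := by
        rw [← hTz]; exact hz
      have hcoef := Fintype.linearIndependent_iff.mp hli
        ![-(B.repr z 2 * (ε * polar n y (mul y y))), -(B.repr z 0 * δ),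
          -(B.repr z 1 * (γ * polar n x (mul x x))), B.repr z 5 * (ε * polar n x (mul x x)),
          B.repr z 3 * γ, B.repr z 4 * (δ * polar n y (mul y y)), 0, 0]
        (by
          rw [Fin.sum_univ_eight]
          show (-(B.repr z 2 * (ε * polar n y (mul y y)))) • x +
            (-(B.repr z 0 * δ)) • mul (mul y x) x +
            (-(B.repr z 1 * (γ * polar n x (mul x x)))) • mul y y +
            (B.repr z 5 * (ε * polar n x (mul x x))) • y +
            (B.repr z 3 * γ) • mul y (mul y x) +
            (B.repr z 4 * (δ * polar n y (mul y y))) • mul x x +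
            (0:k) • mul y x + (0:k) • mul (mul y x) (mul y x) = 0
          rw [zero_smul, zero_smul, add_zero, add_zero]
          exact h0)
      have hr0 : B.repr z 0 = 0 := by
        have h := hcoef 1
        rw [show (![-(B.repr z 2 * (ε * polar n y (mul y y))), -(B.repr z 0 * δ),
          -(B.repr z 1 * (γ * polar n x (mul x x))), B.repr z 5 * (ε * polar n x (mul x x)),
          B.repr z 3 * γ, B.repr z 4 * (δ * polar n y (mul y y)), 0, 0] : Fin 8 → k) 1
          = -(B.repr z 0 * δ) from rfl, neg_eq_zero] at h
        exact (mul_eq_zero.mp h).resolve_right hδ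
      have hr1 : B.repr z 1 = 0 := by
        have h := hcoef 2
        rw [show (![-(B.repr z 2 * (ε * polar n y (mul y y))), -(B.repr z 0 * δ),
          -(B.repr z 1 * (γ * polar n x (mul x x))), B.repr z 5 * (ε * polar n x (mul x x)),
          B.repr z 3 * γ, B.repr z 4 * (δ * polar n y (mul y y)), 0, 0] : Fin 8 → k) 2
          = -(B.repr z 1 * (γ * polar n x (mul x x))) from rfl, neg_eq_zero] at h
        exact (mul_eq_zero.mp h).resolve_right (mul_ne_zero hγ hxa)
      have hr2 : B.repr z 2 = 0 := by
        have h := hcoef 0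
        rw [show (![-(B.repr z 2 * (ε * polar n y (mul y y))), -(B.repr z 0 * δ),
          -(B.repr z 1 * (γ * polar n x (mul x x))), B.repr z 5 * (ε * polar n x (mul x x)),
          B.repr z 3 * γ, B.repr z 4 * (δ * polar n y (mul y y)), 0, 0] : Fin 8 → k) 0
          = -(B.repr z 2 * (ε * polar n y (mul y y))) from rfl, neg_eq_zero] at h
        exact (mul_eq_zero.mp h).resolve_right (mul_ne_zero hε hya)
      have hr3 : B.repr z 3 = 0 := by
        have h := hcoef 4
        rw [show (![-(B.repr z 2 * (ε * polar n y (mul y y))), -(B.repr z 0 * δ),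
          -(B.repr z 1 * (γ * polar n x (mul x x))), B.repr z 5 * (ε * polar n x (mul x x)),
          B.repr z 3 * γ, B.repr z 4 * (δ * polar n y (mul y y)), 0, 0] : Fin 8 → k) 4
          = B.repr z 3 * γ from rfl] at h
        exact (mul_eq_zero.mp h).resolve_right hγ
      have hr4 : B.repr z 4 = 0 := by
        have h := hcoef 5
        rw [show (![-(B.repr z 2 * (ε * polar n y (mul y y))), -(B.repr z 0 * δ),
          -(B.repr z 1 * (γ * polar n x (mul x x))), B.repr z 5 * (ε * polar n x (mul x x)),
          B.repr z 3 * γ, B.repr z 4 * (δ * polar n y (mul y y)), 0, 0] : Fin 8 → k) 5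
          = B.repr z 4 * (δ * polar n y (mul y y)) from rfl] at h
        exact (mul_eq_zero.mp h).resolve_right (mul_ne_zero hδ hya)
      have hr5 : B.repr z 5 = 0 := by
        have h := hcoef 3
        rw [show (![-(B.repr z 2 * (ε * polar n y (mul y y))), -(B.repr z 0 * δ),
          -(B.repr z 1 * (γ * polar n x (mul x x))), B.repr z 5 * (ε * polar n x (mul x x)),
          B.repr z 3 * γ, B.repr z 4 * (δ * polar n y (mul y y)), 0, 0] : Fin 8 → k) 3
          = B.repr z 5 * (ε * polar n x (mul x x)) from rfl] at h
        exact (mul_eq_zero.mp h).resolve_right (mul_ne_zero hε hxa)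
      rw [hr0, hr1, hr2, hr3, hr4, hr5] at hrep
      simp only [zero_smul, zero_add] at hrep
      exact Submodule.mem_span_pair.mpr ⟨B.repr z 6, B.repr z 7, hrep⟩
    · rw [Submodule.span_le]
      rintro s hs
      simp only [Set.mem_insert_iff, Set.mem_singleton_iff] at hs
      rcases hs with rfl | rfl
      · exact LinearMap.mem_ker.mpr hT6
      · exact LinearMap.mem_ker.mpr hT7
end
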